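/- arXiv:2206.06594 — 9 statements merged into one kernel-verified Lean document; each statement's English description precedes it below -/
import Mathlib

section
/- Let F, E : [0, ∞) → ℝ be differentiable functions satisfying F′(t) = −2·F(t)·E(t) and E′(t) = −E(t) for all t ≥ 0, with initial values F(0) = 1/2 and E(0) = 1/2. Then F(t) converges to (1/2)·e^{−1} as t → ∞. -/
/-!
Both equations are linear, so an integrating factor solves them on `[0, ∞)`:
`E t = e^{-t} / 2`, hence `F' = -e^{-t} F` and `F t = e^{e^{-t} - 1} / 2`, which tends to
`e^{-1} / 2` because `e^{-t} → 0`.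
-/

open Filter Real

theorem eq_mul_exp_of_hasDerivAt_mul {f a A : ℝ → ℝ} {t₀ : ℝ}
    (hA : ∀ x, t₀ ≤ x → HasDerivAt A (a x) x)
    (hf : ∀ x, t₀ ≤ x → HasDerivAt f (a x * f x) x) {t : ℝ} (ht : t₀ ≤ t) :
    f t = f t₀ * exp (A t - A t₀) := by
  have hderiv : ∀ x, t₀ ≤ x → HasDerivAt (fun y => f y * exp (-A y)) 0 x := fun x hx =>
    ((hf x hx).mul ((hA x hx).neg.exp)).congr_deriv (by ring)
  have hconst := constant_of_has_deriv_right_zero (a := t₀) (b := t)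
    (fun x hx => (hderiv x hx.1).continuousAt.continuousWithinAt)
    (fun x hx => (hderiv x hx.1).hasDerivWithinAt) t ⟨ht, le_rfl⟩
  calc f t = f t * exp (-A t) * exp (A t) := by
        rw [mul_assoc, ← exp_add, neg_add_cancel, exp_zero, mul_one]
    _ = f t₀ * exp (A t - A t₀) := by rw [hconst, sub_eq_neg_add, exp_add]; ring

/-- Limiting behavior of the motivating example: the proportion of agents in
state `F` converges to `(1/2)·e⁻¹`. -/
theorem stmt_1 (F E : ℝ → ℝ)
    (hF : ∀ t : ℝ, 0 ≤ t → HasDerivAt F (-2 * F t * E t) t)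
    (hE : ∀ t : ℝ, 0 ≤ t → HasDerivAt E (-(E t)) t)
    (hF0 : F 0 = 1 / 2) (hE0 : E 0 = 1 / 2) :
    Tendsto F atTop (nhds ((1 / 2) * Real.exp (-1))) := by
  have hE_eq : ∀ t, 0 ≤ t → E t = 1 / 2 * exp (-t) := fun t ht => by
    have := eq_mul_exp_of_hasDerivAt_mul (f := E) (a := fun _ => -1) (A := Neg.neg)
      (fun x _ => hasDerivAt_neg x) (fun x hx => (hE x hx).congr_deriv (by ring)) ht
    simpa [hE0] using this
  have hF_eq : ∀ t, 0 ≤ t → F t = 1 / 2 * exp (exp (-t) - 1) := fun t ht => by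
    have := eq_mul_exp_of_hasDerivAt_mul (f := F) (a := fun x => -exp (-x))
      (A := fun x => exp (-x)) (fun x _ => by simpa using (hasDerivAt_neg x).exp)
      (fun x hx => (hF x hx).congr_deriv (by rw [hE_eq x hx]; ring)) ht
    simpa [hF0] using this
  have hlim : Tendsto (fun t => 1 / 2 * exp (exp (-t) - 1)) atTop (nhds (1 / 2 * exp (0 - 1))) :=
    ((tendsto_exp_neg_atTop_nhds_zero.sub_const 1).rexp).const_mul _
  rw [zero_sub] at hlim
  exact hlim.congr' ((eventually_ge_atTop 0).mono fun t ht => (hF_eq t ht).symm)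
end

section
/- Let q ≥ 1 be a natural number and let x : [0, ∞) → (Fin q → ℝ) be a differentiable function satisfying, for every i ∈ Fin q, the cyclic linear ODE x_i′(t) = x_{i−1}(t) − x_i(t) (where the index i−1 is taken modulo q), and suppose ∑_{i} x_i(0) = 1. Then for every i ∈ Fin q, x_i(t) converges to 1/q as t → ∞. -/
/-!
The squared deviation `V = ∑ i, (x i - 1/q)²` is a Lyapunov function. The flow conserves mass,
so the deviations `y i = x i - 1/q` sum to zero, and `V' = -∑ i, (y i - y (i-1))²`. On the cycle,
a vector with zero sum satisfies the Poincaré inequality `∑ y i² ≤ q⁴ ∑ (y i - y (i-1))²`: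
each `|y i|` is at most the largest difference `|y i - y j|`, and walking around the cycle
from `j` to `i` bounds that by `q ∑ |y k - y (k-1)|`. Hence `V' ≤ -V/q⁴`, and Grönwall gives
exponential decay of `V`.
-/

open Filter Topology Real
open Fin.NatCast Fin.CommRing

section Cycle

variable {q : ℕ} [NeZero q]

lemma sum_comp_sub_one {M : Type*} [AddCommMonoid M] (f : Fin q → M) :
    ∑ i, f (i - 1) = ∑ i, f i :=
  Equiv.sum_comp (Equiv.subRight 1) f

lemma sum_two_mul_mul_sub_pred (y : Fin q → ℝ) :
    ∑ i, 2 * y i * (y (i - 1) - y i) = -∑ i, (y i - y (i - 1)) ^ 2 := by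
  have h : ∀ i, 2 * y i * (y (i - 1) - y i) = (y (i - 1) ^ 2 - y i ^ 2) - (y i - y (i - 1)) ^ 2 :=
    fun i => by ring
  simp only [h, Finset.sum_sub_distrib, sum_comp_sub_one fun i => y i ^ 2, sub_self, zero_sub]

lemma abs_sub_add_natCast_le (y : Fin q → ℝ) (b : Fin q) (m : ℕ) :
    |y (b + m) - y b| ≤ m * ∑ k, |y k - y (k - 1)| := by
  induction m with
  | zero => simp
  | succ m ih =>
    have hstep : |y (b + m + 1) - y (b + m)| ≤ ∑ k, |y k - y (k - 1)| := by
      simpa using Finset.single_le_sum (f := fun k => |y k - y (k - 1)|)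
        (fun k _ => abs_nonneg _) (Finset.mem_univ (b + m + 1))
    calc |y (b + (m + 1 : ℕ)) - y b|
        = |(y (b + m + 1) - y (b + m)) + (y (b + m) - y b)| := by
          rw [sub_add_sub_cancel, Nat.cast_succ, add_assoc]
      _ ≤ |y (b + m + 1) - y (b + m)| + |y (b + m) - y b| := abs_add_le _ _
      _ ≤ ((m + 1 : ℕ) : ℝ) * ∑ k, |y k - y (k - 1)| := by push_cast; linarith

lemma abs_sub_le_mul_sum_abs_sub_pred (y : Fin q → ℝ) (a b : Fin q) :
    |y a - y b| ≤ q * ∑ k, |y k - y (k - 1)| := by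
  have ha : a = b + ((a - b).val : Fin q) := by rw [Fin.cast_val_eq_self]; ring
  rw [ha]
  refine (abs_sub_add_natCast_le y b _).trans ?_
  gcongr
  exact (a - b).isLt.le

lemma abs_le_mul_sum_abs_sub_pred_of_sum_eq_zero (y : Fin q → ℝ) (h0 : ∑ i, y i = 0)
    (i : Fin q) : |y i| ≤ q * ∑ k, |y k - y (k - 1)| := by
  have hq : (0 : ℝ) < q := by exact_mod_cast NeZero.pos q
  have hmean : (q : ℝ) * y i = ∑ j, (y i - y j) := by simp [Finset.sum_sub_distrib, h0]
  refine le_of_mul_le_mul_left ?_ hq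
  calc q * |y i| = |∑ j, (y i - y j)| := by rw [← hmean, abs_mul, abs_of_pos hq]
    _ ≤ ∑ j, |y i - y j| := Finset.abs_sum_le_sum_abs _ _
    _ ≤ ∑ _j : Fin q, q * ∑ k, |y k - y (k - 1)| :=
      Finset.sum_le_sum fun j _ => abs_sub_le_mul_sum_abs_sub_pred y i j
    _ = q * (q * ∑ k, |y k - y (k - 1)|) := by simp

lemma sum_sq_le_mul_sum_sq_sub_pred_of_sum_eq_zero (y : Fin q → ℝ) (h0 : ∑ i, y i = 0) :
    ∑ i, y i ^ 2 ≤ (q : ℝ) ^ 4 * ∑ i, (y i - y (i - 1)) ^ 2 := by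
  set A := ∑ k, |y k - y (k - 1)|
  have hA : A ^ 2 ≤ q * ∑ i, (y i - y (i - 1)) ^ 2 := by
    simpa [sq_abs] using sq_sum_le_card_mul_sum_sq (s := Finset.univ)
      (f := fun k => |y k - y (k - 1)|)
  have hy : ∀ i, y i ^ 2 ≤ ((q : ℝ) * A) ^ 2 := fun i =>
    sq_le_sq' (abs_le.1 (abs_le_mul_sum_abs_sub_pred_of_sum_eq_zero y h0 i)).1
      (abs_le.1 (abs_le_mul_sum_abs_sub_pred_of_sum_eq_zero y h0 i)).2
  calc ∑ i, y i ^ 2 ≤ ∑ _i : Fin q, ((q : ℝ) * A) ^ 2 := Finset.sum_le_sum fun i _ => hy i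
    _ = (q : ℝ) ^ 3 * A ^ 2 := by
      simp only [Finset.sum_const, Finset.card_univ, Fintype.card_fin, nsmul_eq_mul]; ring
    _ ≤ (q : ℝ) ^ 3 * (q * ∑ i, (y i - y (i - 1)) ^ 2) := by gcongr
    _ = (q : ℝ) ^ 4 * ∑ i, (y i - y (i - 1)) ^ 2 := by ring

end Cycle

lemma le_mul_exp_of_hasDerivAt_le_neg_mul {V V' : ℝ → ℝ} {k : ℝ}
    (hV : ∀ t, 0 ≤ t → HasDerivAt V (V' t) t) (hle : ∀ t, 0 ≤ t → V' t ≤ -k * V t)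
    {t : ℝ} (ht : 0 ≤ t) : V t ≤ V 0 * exp (-k * t) := by
  have := le_gronwallBound_of_liminf_deriv_right_le (f' := V') (δ := V 0) (K := -k) (ε := 0)
    (fun s hs => (hV s hs.1).continuousAt.continuousWithinAt)
    (fun s hs _ hr => (hV s hs.1).hasDerivWithinAt.liminf_right_slope_le hr)
    le_rfl (fun s hs => by simpa using hle s hs.1) t ⟨ht, le_rfl⟩
  simpa [gronwallBound_ε0] using this

section CycleODE

variable {q : ℕ} [NeZero q]

def SolvesCycleODE (x : ℝ → Fin q → ℝ) : Prop :=
  ∀ t, 0 ≤ t → ∀ i, HasDerivAt (fun t => x t i) (x t (i - 1) - x t i) t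

variable {x : ℝ → Fin q → ℝ}

lemma SolvesCycleODE.sum_eq_sum_zero (hx : SolvesCycleODE x) {t : ℝ} (ht : 0 ≤ t) :
    ∑ i, x t i = ∑ i, x 0 i := by
  have hderiv : ∀ s, 0 ≤ s → HasDerivAt (fun t => ∑ i, x t i) 0 s := fun s hs => by
    simpa [Finset.sum_sub_distrib, sum_comp_sub_one fun i => x s i] using
      HasDerivAt.fun_sum fun i (_ : i ∈ Finset.univ) => hx s hs i
  exact constant_of_has_deriv_right_zero (f := fun t => ∑ i, x t i)
    (fun s hs => (hderiv s hs.1).continuousAt.continuousWithinAt)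
    (fun s hs => (hderiv s hs.1).hasDerivWithinAt) t ⟨ht, le_rfl⟩

lemma SolvesCycleODE.hasDerivAt_sum_sq_sub (hx : SolvesCycleODE x) (c : ℝ) {t : ℝ}
    (ht : 0 ≤ t) :
    HasDerivAt (fun t => ∑ i, (x t i - c) ^ 2) (-∑ i, (x t i - x t (i - 1)) ^ 2) t := by
  refine (HasDerivAt.fun_sum fun i (_ : i ∈ Finset.univ) =>
    ((hx t ht i).sub_const c).fun_pow 2).congr_deriv ?_
  have h := sum_two_mul_mul_sub_pred fun i => x t i - c
  simp only [sub_sub_sub_cancel_right] at h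
  rw [← h]
  simp

lemma SolvesCycleODE.tendsto_sum_sq_sub (hx : SolvesCycleODE x) (hsum : ∑ i, x 0 i = 1) :
    Tendsto (fun t => ∑ i, (x t i - 1 / q) ^ 2) atTop (𝓝 0) := by
  set V := fun t => ∑ i, (x t i - 1 / q) ^ 2
  have hq : (0 : ℝ) < q := by exact_mod_cast NeZero.pos q
  have hcentered : ∀ t, 0 ≤ t → ∑ i, (x t i - 1 / q) = 0 := fun t ht => by
    rw [Finset.sum_sub_distrib, hx.sum_eq_sum_zero ht, hsum]
    field_simp
    simp
  have hdecay : ∀ t, 0 ≤ t → -∑ i, (x t i - x t (i - 1)) ^ 2 ≤ -(1 / q ^ 4) * V t := by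
    intro t ht
    have := sum_sq_le_mul_sum_sq_sub_pred_of_sum_eq_zero _ (hcentered t ht)
    simp only [sub_sub_sub_cancel_right] at this
    rw [neg_mul, neg_le_neg_iff, div_mul_eq_mul_div, one_mul, div_le_iff₀ (by positivity)]
    linarith
  have hbound : ∀ t, 0 ≤ t → V t ≤ V 0 * exp (-(1 / q ^ 4) * t) := fun t ht =>
    le_mul_exp_of_hasDerivAt_le_neg_mul (fun s hs => hx.hasDerivAt_sum_sq_sub _ hs) hdecay ht
  have hlim : Tendsto (fun t => V 0 * exp (-(1 / q ^ 4) * t)) atTop (𝓝 0) := by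
    simpa using (tendsto_exp_atBot.comp (tendsto_id.const_mul_atTop_of_neg
      (neg_neg_of_pos (by positivity : (0 : ℝ) < 1 / q ^ 4)))).const_mul (V 0)
  exact squeeze_zero' (Eventually.of_forall fun t => Finset.sum_nonneg fun i _ => sq_nonneg _)
    (eventually_ge_atTop 0 |>.mono hbound) hlim

theorem SolvesCycleODE.tendsto (hx : SolvesCycleODE x) (hsum : ∑ i, x 0 i = 1) (i : Fin q) :
    Tendsto (fun t => x t i) atTop (𝓝 (1 / q)) := by
  rw [← tendsto_sub_nhds_zero_iff]
  have hsqrt := (hx.tendsto_sum_sq_sub hsum).sqrt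
  rw [sqrt_zero] at hsqrt
  refine squeeze_zero_norm (fun t => ?_) hsqrt
  exact abs_le_sqrt (Finset.single_le_sum (f := fun j => (x t j - 1 / q) ^ 2)
    (fun j _ => sq_nonneg _) (Finset.mem_univ i))

end CycleODE

/-- The cyclic unimolecular protocol `X_i → X_{(i mod q)+1}`: every state
converges to `1/q`. Index arithmetic is taken cyclically in `Fin q`. -/
theorem stmt_4 (q : ℕ) (hq : 1 ≤ q) (x : ℝ → (Fin q → ℝ))
    (hx : ∀ t : ℝ, 0 ≤ t → ∀ i : Fin q,
      HasDerivAt (fun t => x t i)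
        (x t (i - ⟨1 % q, Nat.mod_lt 1 (by omega)⟩) - x t i) t)
    (hsum : ∑ i : Fin q, x 0 i = 1) :
    ∀ i : Fin q, Tendsto (fun t => x t i) atTop (nhds (1 / (q : ℝ))) := by
  have : NeZero q := ⟨by omega⟩
  have hone : (⟨1 % q, Nat.mod_lt 1 (by omega)⟩ : Fin q) = 1 := Fin.ext (Fin.val_one' q).symm
  exact SolvesCycleODE.tendsto (fun t ht i => hone ▸ hx t ht i) hsum
end

section
/- Let n ≥ 1, let σ : Fin n → Fin n be any function, and let x : [0, ∞) → (Fin n → ℝ) be a differentiable function satisfying, for every i ∈ Fin n, x_i′(t) = (∑_{j : σ(j) = i} x_j(t)) − x_i(t), with all initial values x_i(0) rational. Then for every i ∈ Fin n the limit lim_{t→∞} x_i(t) exists and is a rational number. -/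
/-!
With `P i j = 1` iff `σ j = i`, the solution is `x t = exp (t • (P - 1)) x 0`, so `x t i` is a
combination of the initial values with coefficients `e^{-t} ∑ₖ tᵏ/k! [σᵏ j = i]`, the Borel
(Poisson) means of the sequences `k ↦ [σᵏ j = i]`. These sequences are eventually periodic
because `σ` acts on a finite set, and the Borel mean of an eventually periodic sequence tends to
its average over one period: by Fourier inversion on `ZMod L` a periodic sequence is a
combination of `k ↦ ζᵏ` with `ζ` an `L`-th root of unity, the Borel mean of `ζᵏ` is
`exp (t (ζ - 1))`, and this tends to `0` unless `ζ = 1`. Period averages of `0/1` sequences are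
rational.
-/

open Filter Topology

section BorelMean

variable {E : Type*} [NormedAddCommGroup E] [NormedSpace ℝ E]

noncomputable def borelMean (c : ℕ → E) (t : ℝ) : E :=
  Real.exp (-t) • ∑' k, (t ^ k / k.factorial) • c k

theorem hasSum_borel_pow (t : ℝ) (z : ℂ) :
    HasSum (fun k => (t ^ k / k.factorial) • z ^ k) (Complex.exp (t * z)) := by
  have h : (fun k => (t ^ k / k.factorial) • z ^ k)
      = fun k => ((t : ℂ) * z) ^ k / k.factorial := by
    funext k
    rw [Complex.real_smul, mul_pow]
    push_cast
    ring
  rw [h, Complex.exp_eq_exp_ℂ]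
  exact NormedSpace.expSeries_div_hasSum_exp _

theorem Complex.tendsto_exp_mul_sub_one_atTop {z : ℂ} (hz : ‖z‖ = 1) (hz1 : z ≠ 1) :
    Tendsto (fun t : ℝ => Complex.exp (t * (z - 1))) atTop (𝓝 0) := by
  have hre : z.re < 1 := by
    refine (Complex.re_le_norm z).trans_eq hz |>.lt_of_ne fun h => hz1 ?_
    have him : z.im = 0 := Complex.abs_re_eq_norm.1 (by rw [h, hz, abs_one])
    exact Complex.ext h him
  rw [tendsto_zero_iff_norm_tendsto_zero]
  simp only [Complex.norm_exp, Complex.re_ofReal_mul, Complex.sub_re, Complex.one_re]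
  exact Real.tendsto_exp_atBot.comp (tendsto_id.atTop_mul_const_of_neg (by linarith))

section ZMod

open ZMod

variable {L : ℕ} [NeZero L]

theorem hasSum_borel_zmod (f : ZMod L → ℂ) (t : ℝ) :
    HasSum (fun k : ℕ => (t ^ k / k.factorial) • f k)
      (∑ j, ((L : ℂ)⁻¹ * 𝓕 f j) * Complex.exp (t * stdAddChar j)) := by
  have hf : ∀ k : ℕ, f k = ∑ j, ((L : ℂ)⁻¹ * 𝓕 f j) * stdAddChar j ^ k := by
    intro k
    conv_lhs => rw [← dft.symm_apply_apply f, invDFT_apply, Finset.smul_sum]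
    refine Finset.sum_congr rfl fun j _ => ?_
    rw [mul_comm j, ← nsmul_eq_mul, AddChar.map_nsmul_eq_pow, smul_eq_mul, smul_eq_mul]
    ring
  simp_rw [hf, Finset.smul_sum]
  refine hasSum_sum fun j _ => ?_
  simpa only [mul_smul_comm] using
    (hasSum_borel_pow t (stdAddChar j)).mul_left ((L : ℂ)⁻¹ * 𝓕 f j)

theorem tendsto_borelMean_zmod (f : ZMod L → ℂ) :
    Tendsto (borelMean fun k : ℕ => f k) atTop (𝓝 ((L : ℂ)⁻¹ * ∑ j, f j)) := by
  have h : ∀ t : ℝ, borelMean (fun k : ℕ => f k) t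
      = ∑ j, ((L : ℂ)⁻¹ * 𝓕 f j) * Complex.exp (t * (stdAddChar j - 1)) := by
    intro t
    rw [borelMean, (hasSum_borel_zmod f t).tsum_eq, Finset.smul_sum]
    refine Finset.sum_congr rfl fun j _ => ?_
    rw [mul_sub, mul_one, Complex.exp_sub, Complex.real_smul, Complex.ofReal_exp,
      Complex.ofReal_neg, Complex.exp_neg]
    ring
  have hval : (L : ℂ)⁻¹ * ∑ j, f j
      = ∑ j, ((L : ℂ)⁻¹ * 𝓕 f j) * if j = 0 then 1 else 0 := by
    simp [dft_apply_zero]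
  rw [hval, show borelMean (fun k : ℕ => f k) = _ from funext h]
  refine tendsto_finsetSum _ fun j _ => tendsto_const_nhds.mul ?_
  split_ifs with hj
  · simp [hj]
  · exact Complex.tendsto_exp_mul_sub_one_atTop (Circle.norm_coe _)
      fun h1 => hj (injective_stdAddChar (h1.trans (AddChar.map_zero_eq_one _).symm))

end ZMod

theorem tendsto_borelMean_of_eventuallyEq {c d : ℕ → E} (hcd : c =ᶠ[atTop] d)
    (hd : ∀ t : ℝ, Summable fun k => (t ^ k / k.factorial) • d k) {a : E}
    (h : Tendsto (borelMean d) atTop (𝓝 a)) : Tendsto (borelMean c) atTop (𝓝 a) := by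
  obtain ⟨K, hcd⟩ := eventually_atTop.1 hcd
  have hsplit : ∀ t : ℝ, borelMean c t = borelMean d t
      + ∑ k ∈ Finset.range K, (Real.exp (-t) * (t ^ k / k.factorial)) • (c k - d k) := by
    intro t
    have hdiff : HasSum (fun k => (t ^ k / k.factorial) • (c k - d k))
        (∑ k ∈ Finset.range K, (t ^ k / k.factorial) • (c k - d k)) :=
      hasSum_sum_of_ne_finset_zero fun k hk => by
        rw [hcd k (not_lt.1 (Finset.mem_range.not.1 hk)), sub_self, smul_zero]
    have hc := (hd t).hasSum.add hdiff
    simp only [← smul_add, add_sub_cancel] at hc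
    simp only [borelMean, hc.tsum_eq, smul_add, Finset.smul_sum, smul_smul]
  have hfin : Tendsto (fun t : ℝ => ∑ k ∈ Finset.range K,
      (Real.exp (-t) * (t ^ k / k.factorial)) • (c k - d k)) atTop (𝓝 0) := by
    rw [← Finset.sum_const_zero (s := Finset.range K)]
    refine tendsto_finsetSum _ fun k _ => ?_
    rw [← zero_smul ℝ (c k - d k)]
    refine Tendsto.smul_const ?_ _
    have h := (Real.tendsto_pow_mul_exp_neg_atTop_nhds_zero k).div_const (k.factorial : ℝ)
    rw [zero_div] at h
    exact h.congr fun t => by ring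
  simpa only [← hsplit, add_zero] using h.add hfin

theorem Function.Periodic.eq_comp_zmodVal {d : ℕ → ℂ} {L : ℕ} (hd : Function.Periodic d L) :
    d = fun k : ℕ => d (k : ZMod L).val := by
  funext k
  rw [ZMod.val_natCast, hd.map_mod_nat]

theorem summable_borel_of_periodic {d : ℕ → ℂ} {L : ℕ} (hL : 0 < L)
    (hd : Function.Periodic d L) (t : ℝ) : Summable fun k => (t ^ k / k.factorial) • d k := by
  have : NeZero L := ⟨hL.ne'⟩
  rw [hd.eq_comp_zmodVal]
  exact (hasSum_borel_zmod (fun j : ZMod L => d j.val) t).summable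

theorem tendsto_borelMean_of_periodic {d : ℕ → ℂ} {L : ℕ} (hL : 0 < L)
    (hd : Function.Periodic d L) :
    Tendsto (borelMean d) atTop (𝓝 ((L : ℂ)⁻¹ * ∑ r ∈ Finset.range L, d r)) := by
  have : NeZero L := ⟨hL.ne'⟩
  have hsum : ∑ r ∈ Finset.range L, d r = ∑ j : ZMod L, d j.val := by
    obtain ⟨L, rfl⟩ := Nat.exists_eq_add_one_of_ne_zero hL.ne'
    exact (Fin.sum_univ_eq_sum_range d _).symm
  have h := tendsto_borelMean_zmod (fun j : ZMod L => d j.val)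
  rwa [← hd.eq_comp_zmodVal, ← hsum] at h

theorem ofReal_borelMean (c : ℕ → ℝ) (t : ℝ) :
    ((borelMean c t : ℝ) : ℂ) = borelMean (fun k => (c k : ℂ)) t := by
  simp only [borelMean, Complex.real_smul, smul_eq_mul, Complex.ofReal_mul, Complex.ofReal_tsum]

theorem tendsto_borelMean_of_eventually_periodic {c : ℕ → ℝ} {K L : ℕ} (hL : 0 < L)
    (hc : ∀ k, K ≤ k → c (k + L) = c k) :
    Tendsto (borelMean c) atTop
      (𝓝 ((L : ℝ)⁻¹ * ∑ r ∈ Finset.range L, c (r + L * K))) := by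
  have hiter : ∀ m k, K ≤ k → c (k + L * m) = c k := by
    intro m
    induction m with
    | zero => simp
    | succ m ih => intro k hk; rw [mul_add_one, ← add_assoc, hc _ (by omega), ih k hk]
  set d : ℕ → ℂ := fun k => c (k + L * K) with hd_def
  have hd : Function.Periodic d L := fun k => by
    simp only [hd_def]
    rw [add_right_comm, hc _ (le_add_left (Nat.le_mul_of_pos_left K hL))]
  have hcd : (fun k => (c k : ℂ)) =ᶠ[atTop] d :=
    eventually_atTop.2 ⟨K, fun k hk => by simp only [hd_def, hiter K k hk]⟩
  have h := tendsto_borelMean_of_eventuallyEq hcd (summable_borel_of_periodic hL hd)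
    (tendsto_borelMean_of_periodic hL hd)
  rw [← Filter.tendsto_ofReal_iff]
  simpa [ofReal_borelMean, hd_def] using h

end BorelMean

section MatrixExp

open Matrix

-- Any norm would do: it only serves the calculus of `exp`, and the statements do not mention it.
attribute [local instance] Matrix.linftyOpNormedAddCommGroup Matrix.linftyOpNormedRing
  Matrix.linftyOpNormedAlgebra

variable {m : Type*} [Fintype m] [DecidableEq m]

theorem Matrix.eq_exp_smul_mulVec_of_hasDerivAt (A : Matrix m m ℝ) {x : ℝ → m → ℝ}
    (hx : ∀ t, 0 ≤ t → HasDerivAt x (A *ᵥ x t) t) {t : ℝ} (ht : 0 ≤ t) :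
    x t = NormedSpace.exp (t • A) *ᵥ x 0 := by
  let evalAt : Matrix m m ℝ →L[ℝ] m → ℝ :=
    LinearMap.toContinuousLinearMap (LinearMap.applyₗ (x 0) ∘ₗ toLin'.toLinearMap)
  have hsol : ∀ s : ℝ, HasDerivAt (fun s : ℝ => NormedSpace.exp (s • A) *ᵥ x 0)
      (A *ᵥ (NormedSpace.exp (s • A) *ᵥ x 0)) s := by
    intro s
    have heq : evalAt (NormedSpace.exp (s • A) * A)
        = A *ᵥ (NormedSpace.exp (s • A) *ᵥ x 0) := by
      simp [evalAt, mulVec_mulVec, ((Commute.refl A).smul_left s).exp_left.eq]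
    rw [← heq]
    exact evalAt.hasFDerivAt.comp_hasDerivAt s (hasDerivAt_exp_smul_const A s)
  refine ODE_solution_unique (v := fun _ y => A *ᵥ y)
    (fun _ => (LinearMap.toContinuousLinearMap A.mulVecLin).lipschitz)
    (fun s hs => (hx s hs.1).continuousAt.continuousWithinAt)
    (fun s hs => (hx s hs.1).hasDerivWithinAt)
    (fun s _ => (hsol s).continuousAt.continuousWithinAt)
    (fun s _ => (hsol s).hasDerivWithinAt) (by simp) ⟨ht, le_rfl⟩

theorem Matrix.exp_smul_sub_one (A : Matrix m m ℝ) (t : ℝ) :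
    NormedSpace.exp (t • (A - 1)) = Real.exp (-t) • NormedSpace.exp (t • A) := by
  have h : t • (A - 1) = t • A + algebraMap ℝ _ (-t) := by
    rw [Algebra.algebraMap_eq_smul_one, smul_sub, neg_smul, sub_eq_add_neg]
  have hexp : NormedSpace.exp (algebraMap ℝ (Matrix m m ℝ) (-t))
      = algebraMap ℝ (Matrix m m ℝ) (Real.exp (-t)) := by
    rw [Real.exp_eq_exp_ℝ]
    exact (NormedSpace.algebraMap_exp_comm _).symm
  rw [h, exp_add_of_commute _ _ (Algebra.commute_algebraMap_right _ _), hexp,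
    ← Algebra.commutes, ← Algebra.smul_def]

theorem Matrix.exp_smul_sub_one_apply (A : Matrix m m ℝ) (t : ℝ) (i j : m) :
    NormedSpace.exp (t • (A - 1)) i j = borelMean (fun k => (A ^ k) i j) t := by
  have h : HasSum (fun k => (t ^ k / k.factorial) • (A ^ k) i j)
      (NormedSpace.exp (t • A) i j) := by
    have := NormedSpace.exp_series_hasSum_exp' (𝕂 := ℝ) (t • A)
    replace := Pi.hasSum.1 (Pi.hasSum.1 this i) j
    simp only [smul_pow, smul_apply, smul_eq_mul, div_eq_inv_mul, mul_assoc] at this ⊢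
    exact this
  rw [exp_smul_sub_one, borelMean, smul_apply, h.tsum_eq]

end MatrixExp

section TransitionMatrix

open Matrix

variable {α : Type*} [DecidableEq α]

def transitionMatrix (R : Type*) [Zero R] [One R] (σ : α → α) : Matrix α α R :=
  of fun i j => if σ j = i then 1 else 0

variable [Fintype α]

theorem transitionMatrix_pow_apply (R : Type*) [Semiring R] (σ : α → α) (k : ℕ) (i j : α) :
    (transitionMatrix R σ ^ k) i j = if σ^[k] j = i then 1 else 0 := by
  induction k generalizing j with
  | zero => simp [one_apply, eq_comm]
  | succ k ih =>
    rw [pow_succ, mul_apply, Finset.sum_eq_single (σ j), ih, Function.iterate_succ_apply]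
    · simp [transitionMatrix]
    · intro l _ hl
      simp [transitionMatrix, Ne.symm hl]
    · simp

theorem transitionMatrix_sub_one_mulVec_apply (R : Type*) [Ring R] (σ : α → α) (v : α → R)
    (i : α) :
    ((transitionMatrix R σ - 1) *ᵥ v) i
      = (∑ j ∈ Finset.univ.filter fun j => σ j = i, v j) - v i := by
  rw [sub_mulVec, Pi.sub_apply, one_mulVec, Finset.sum_filter]
  simp [mulVec, dotProduct, transitionMatrix]

end TransitionMatrix

theorem Function.exists_iterate_add_eq_of_finite {α : Type*} [Finite α] (f : α → α) (x : α) :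
    ∃ K L, 0 < L ∧ ∀ k, K ≤ k → f^[k + L] x = f^[k] x := by
  obtain ⟨a, b, hab, h⟩ := Set.finite_univ.exists_lt_map_eq_of_forall_mem
    (f := fun k => f^[k] x) fun _ => Set.mem_univ _
  refine ⟨a, b - a, by omega, fun k hk => ?_⟩
  obtain ⟨i, rfl⟩ := Nat.exists_eq_add_of_le hk
  rw [show a + i + (b - a) = i + b by omega, Function.iterate_add_apply, ← h,
    ← Function.iterate_add_apply, add_comm]

theorem stmt_5_general (n : ℕ) (σ : Fin n → Fin n)
    (x : ℝ → (Fin n → ℝ))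
    (hx : ∀ t : ℝ, 0 ≤ t → ∀ i : Fin n,
      HasDerivAt (fun t => x t i)
        ((∑ j ∈ Finset.univ.filter fun j => σ j = i, x t j) - x t i) t)
    (hx0 : ∀ i : Fin n, ∃ r : ℚ, x 0 i = (r : ℝ)) :
    ∀ i : Fin n, ∃ L : ℚ, Tendsto (fun t => x t i) atTop (nhds (L : ℝ)) := by
  intro i
  choose r hr using hx0
  set P := transitionMatrix ℝ σ
  have hsol : ∀ t, 0 ≤ t → x t i = ∑ j, borelMean (fun k => (P ^ k) i j) t * x 0 j := by
    intro t ht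
    have hderiv : ∀ s, 0 ≤ s → HasDerivAt x ((P - 1).mulVec (x s)) s := fun s hs =>
      hasDerivAt_pi.2 fun i' => by
        simpa only [P, transitionMatrix_sub_one_mulVec_apply] using hx s hs i'
    rw [(P - 1).eq_exp_smul_mulVec_of_hasDerivAt hderiv ht]
    simp only [Matrix.mulVec, dotProduct, Matrix.exp_smul_sub_one_apply]
  have hlim : ∀ j, ∃ q : ℚ, Tendsto (borelMean fun k => (P ^ k) i j) atTop (𝓝 q) := by
    intro j
    obtain ⟨K, L, hL, hper⟩ := Function.exists_iterate_add_eq_of_finite σ j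
    refine ⟨(L : ℚ)⁻¹ * ∑ r ∈ Finset.range L, if σ^[r + L * K] j = i then 1 else 0,
      ?_⟩
    have := tendsto_borelMean_of_eventually_periodic (K := K) hL (c := fun k => (P ^ k) i j)
      fun k hk => by simp only [P, transitionMatrix_pow_apply, hper k hk]
    simpa [P, transitionMatrix_pow_apply] using this
  choose q hq using hlim
  refine ⟨∑ j, q j * r j, ?_⟩
  push_cast
  simp_rw [← hr]
  refine (tendsto_finsetSum _ fun j _ => (hq j).mul_const (x 0 j)).congr' ?_
  filter_upwards [eventually_ge_atTop 0] with t ht using (hsol t ht).symm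

/-- Deterministic unimolecular large-population protocols compute only
rationals: for the functional-graph flow `x_i' = (∑_{j : σ j = i} x_j) − x_i`
with rational initial data, every coordinate converges to a rational limit. -/
theorem stmt_5 (n : ℕ) (hn : 1 ≤ n) (σ : Fin n → Fin n)
    (x : ℝ → (Fin n → ℝ))
    (hx : ∀ t : ℝ, 0 ≤ t → ∀ i : Fin n,
      HasDerivAt (fun t => x t i)
        ((∑ j ∈ Finset.univ.filter fun j => σ j = i, x t j) - x t i) t)
    (hx0 : ∀ i : Fin n, ∃ r : ℚ, x 0 i = (r : ℝ)) :
    ∀ i : Fin n, ∃ L : ℚ, Tendsto (fun t => x t i) atTop (nhds (L : ℝ)) :=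
  stmt_5_general n σ x hx hx0
end

section
/- Let n ≥ 1 and let p : Fin n → MvPolynomial (Fin n) ℝ be a polynomial vector field such that for each i there are polynomials r_i, s_i all of whose coefficients are nonnegative with p_i = r_i − X_i·s_i. Then there exist m ≥ n, an injection ι : Fin n → Fin m, a polynomial vector field P : Fin m → MvPolynomial (Fin m) ℝ, and a polynomial map φ : ℝ^n → ℝ^m with φ(y)_{ι(i)} = y_i for all y and i, such that: (1) for each k there are polynomials R_k, S_k all of whose coefficients are nonnegative with P_k = R_k − X_k·S_k; (2) each P_k has total degree at most 2; and (3) for every differentiable x : ℝ → ℝ^n satisfying x′(t) = p(x(t)) for all t, the function v(t) = φ(x(t)) satisfies v′(t) = P(v(t)) for all t. -/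
/-! Choose `D` bounding the degrees of all `rᵢ` and `sᵢ`, and introduce a new variable
`v_α = x^α` for every exponent vector `α` with entries at most `D`; the original variables are
the `v_{eᵢ}`. Since `xᵢ ∂ᵢ x^α = αᵢ x^α`,
  `(x^α)' = ∑ᵢ ∂ᵢ(x^α) rᵢ - x^α ∑ᵢ αᵢ sᵢ`.
Every monomial of the first sum has entries at most `2D`, so it is a product of two new
variables; every monomial of the second sum has entries at most `D`, so that sum is linear in
the new variables. Hence `v_α' = R - v_α S` with `R`, `S` of degree at most two and with
nonnegative coefficients. -/

open MvPolynomial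

noncomputable section

namespace Quadratization

section NonnegCoeffs

variable (σ R : Type*) [CommSemiring R] [PartialOrder R] [IsOrderedRing R]

def nonnegCoeffs : Subsemiring (MvPolynomial σ R) where
  carrier := {p | ∀ d, 0 ≤ p.coeff d}
  mul_mem' {p q} hp hq d := by
    classical
    rw [coeff_mul]
    exact Finset.sum_nonneg fun x _ => mul_nonneg (hp _) (hq _)
  one_mem' d := by
    classical
    rw [coeff_one]
    split_ifs <;> simp
  add_mem' hp hq d := by
    rw [coeff_add]
    exact add_nonneg (hp d) (hq d)
  zero_mem' d := by simp

variable {σ R}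

theorem monomial_mem_nonnegCoeffs (s : σ →₀ ℕ) {a : R} (ha : 0 ≤ a) :
    monomial s a ∈ nonnegCoeffs σ R := fun d => by
  classical
  rw [coeff_monomial]
  split_ifs <;> simp [ha]

theorem C_mem_nonnegCoeffs {a : R} (ha : 0 ≤ a) : C a ∈ nonnegCoeffs σ R :=
  monomial_mem_nonnegCoeffs 0 ha

theorem X_mem_nonnegCoeffs (i : σ) : X i ∈ nonnegCoeffs σ R :=
  monomial_mem_nonnegCoeffs _ zero_le_one

end NonnegCoeffs

section LieDeriv

variable {σ : Type*} [Fintype σ]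

def lieDeriv {R : Type*} [CommSemiring R] (p : σ → MvPolynomial σ R) (q : MvPolynomial σ R) :
    MvPolynomial σ R :=
  ∑ i, pderiv i q * p i

theorem lieDeriv_monomial_of_eq_sub {R : Type*} [CommRing R] {p r s : σ → MvPolynomial σ R}
    (hp : ∀ i, p i = r i - X i * s i) (m : σ →₀ ℕ) :
    lieDeriv p (monomial m 1) =
      ∑ i, pderiv i (monomial m 1) * r i - monomial m 1 * ∑ i, C (m i : R) * s i := by
  rw [lieDeriv, Finset.mul_sum, ← Finset.sum_sub_distrib]
  refine Finset.sum_congr rfl fun i _ => ?_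
  have euler : pderiv i (monomial m (1 : R)) * X i = C (m i : R) * monomial m 1 := by
    rw [mul_comm, X_mul_pderiv_monomial, nsmul_eq_mul, map_natCast]
  rw [hp i, mul_sub, ← mul_assoc, euler]
  ring

theorem hasDerivAt_eval {x : ℝ → σ → ℝ} {x' : σ → ℝ} {t : ℝ}
    (hx : ∀ i, HasDerivAt (fun t => x t i) (x' i) t) (q : MvPolynomial σ ℝ) :
    HasDerivAt (fun t => eval (x t) q) (∑ i, eval (x t) (pderiv i q) * x' i) t := by
  classical
  induction q using MvPolynomial.induction_on with
  | C a => simpa [pderiv_C] using hasDerivAt_const t a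
  | add q q' hq hq' =>
    simp only [map_add, add_mul, Finset.sum_add_distrib]
    exact hq.add hq'
  | mul_X q j hq =>
    simp only [map_mul, eval_X]
    refine (hq.mul (hx j)).congr_deriv ?_
    simp only [Derivation.leibniz, pderiv_X, smul_eq_mul, map_add, map_mul, eval_X, add_mul,
      Finset.sum_add_distrib, Finset.sum_mul, Pi.single_apply, mul_ite, mul_one, mul_zero,
      apply_ite (eval (x t)), map_zero, ite_mul, zero_mul, Finset.sum_ite_eq, Finset.mem_univ,
      if_true]
    rw [add_comm]
    exact congrArg _ (Finset.sum_congr rfl fun _ _ => by ring)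

theorem hasDerivAt_eval_lieDeriv {p : σ → MvPolynomial σ ℝ} {x : ℝ → σ → ℝ} {t : ℝ}
    (hx : ∀ i, HasDerivAt (fun t => x t i) (eval (x t) (p i)) t) (q : MvPolynomial σ ℝ) :
    HasDerivAt (fun t => eval (x t) q) (eval (x t) (lieDeriv p q)) t := by
  simpa [lieDeriv] using hasDerivAt_eval hx q

end LieDeriv

section SubstMonomials

variable {σ τ R : Type*} [CommSemiring R]

def substMonomials (f : (σ →₀ ℕ) → MvPolynomial τ R) (q : MvPolynomial σ R) :
    MvPolynomial τ R :=
  ∑ d ∈ q.support, C (q.coeff d) * f d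

theorem substMonomials_mem_nonnegCoeffs [PartialOrder R] [IsOrderedRing R]
    {f : (σ →₀ ℕ) → MvPolynomial τ R} {q : MvPolynomial σ R} (hq : q ∈ nonnegCoeffs σ R)
    (hf : ∀ d, f d ∈ nonnegCoeffs τ R) : substMonomials f q ∈ nonnegCoeffs τ R :=
  sum_mem fun d _ => mul_mem (C_mem_nonnegCoeffs (hq d)) (hf d)

theorem totalDegree_substMonomials_le {f : (σ →₀ ℕ) → MvPolynomial τ R} {k : ℕ}
    (hf : ∀ d, (f d).totalDegree ≤ k) (q : MvPolynomial σ R) :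
    (substMonomials f q).totalDegree ≤ k := by
  refine (totalDegree_finsetSum _ _).trans (Finset.sup_le fun d _ => ?_)
  refine (totalDegree_mul _ _).trans ?_
  simpa using hf d

theorem bind₁_substMonomials {f : (σ →₀ ℕ) → MvPolynomial τ R} {g : τ → MvPolynomial σ R}
    {q : MvPolynomial σ R} (hf : ∀ d ∈ q.support, bind₁ g (f d) = monomial d 1) :
    bind₁ g (substMonomials f q) = q := by
  conv_rhs => rw [q.as_sum]
  refine (map_sum _ _ _).trans (Finset.sum_congr rfl fun d hd => ?_)
  rw [map_mul, bind₁_C_right, hf d hd, C_mul_monomial, mul_one]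

end SubstMonomials

theorem eval_bind₁ {σ τ R : Type*} [CommSemiring R] (y : σ → R) (g : τ → MvPolynomial σ R)
    (q : MvPolynomial τ R) : eval y (bind₁ g q) = eval (fun j => eval y (g j)) q :=
  eval₂Hom_bind₁ (RingHom.id R) y g q

theorem degreeOf_pderiv_monomial_le {σ R : Type*} [CommSemiring R] (i j : σ) (m : σ →₀ ℕ)
    (a : R) : degreeOf j (pderiv i (monomial m a)) ≤ m j := by
  rw [pderiv_monomial, degreeOf_le_iff]
  intro m' hm'
  rw [Finset.mem_singleton.mp (support_monomial_subset hm')]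
  exact tsub_le_self

theorem totalDegree_X_le {σ R : Type*} [CommSemiring R] (i : σ) :
    (X i : MvPolynomial σ R).totalDegree ≤ 1 :=
  (totalDegree_monomial_le _ _).trans (by simp)

section BoundedExponents

variable {n : ℕ} (D : ℕ) {R : Type*} [CommSemiring R]

-- The new variables are the exponent vectors `Fin n → Fin (D + 1)`, numbered by
-- `finFunctionFinEquiv`; `varOf` clamps every entry at `D`.
def exponent (k : Fin ((D + 1) ^ n)) : Fin n →₀ ℕ :=
  Finsupp.equivFunOnFinite.symm fun i => finFunctionFinEquiv.symm k i

def varOf (a : Fin n → ℕ) : Fin ((D + 1) ^ n) :=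
  finFunctionFinEquiv fun i => Fin.clamp (a i) D

@[simp]
theorem exponent_varOf_apply (a : Fin n → ℕ) (i : Fin n) :
    exponent D (varOf D a) i = min (a i) D := by
  simp [exponent, varOf]

theorem exponent_apply_le (k : Fin ((D + 1) ^ n)) (i : Fin n) : exponent D k i ≤ D :=
  Nat.lt_succ_iff.mp (finFunctionFinEquiv.symm k i).isLt

theorem exponent_varOf {d : Fin n →₀ ℕ} (hd : ∀ i, d i ≤ D) : exponent D (varOf D d) = d := by
  ext i
  simp [hd i]

def varMonomial (k : Fin ((D + 1) ^ n)) : MvPolynomial (Fin n) R :=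
  monomial (exponent D k) 1

def linearLift (q : MvPolynomial (Fin n) R) : MvPolynomial (Fin ((D + 1) ^ n)) R :=
  substMonomials (fun d => X (varOf D d)) q

-- An entry `e ≤ 2D` splits as `min e D + (e - D)`, both summands being at most `D`.
def quadraticLift (q : MvPolynomial (Fin n) R) : MvPolynomial (Fin ((D + 1) ^ n)) R :=
  substMonomials (fun d => X (varOf D d) * X (varOf D fun i => d i - D)) q

theorem bind₁_linearLift {q : MvPolynomial (Fin n) R} (hq : ∀ i, q.degreeOf i ≤ D) :
    bind₁ (varMonomial D) (linearLift D q) = q := by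
  refine bind₁_substMonomials fun d hd => ?_
  rw [bind₁_X_right, varMonomial, exponent_varOf]
  exact fun i => degreeOf_le_iff.mp (hq i) d hd

theorem bind₁_quadraticLift {q : MvPolynomial (Fin n) R} (hq : ∀ i, q.degreeOf i ≤ 2 * D) :
    bind₁ (varMonomial D) (quadraticLift D q) = q := by
  refine bind₁_substMonomials fun d hd => ?_
  rw [map_mul, bind₁_X_right, bind₁_X_right, varMonomial, varMonomial, monomial_mul, mul_one]
  suffices h : exponent D (varOf D d) + exponent D (varOf D fun i => d i - D) = d by rw [h]
  ext i
  have := degreeOf_le_iff.mp (hq i) d hd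
  simp only [Finsupp.add_apply, exponent_varOf_apply]
  omega

theorem exponent_varOf_single (hD : 1 ≤ D) (i : Fin n) :
    exponent D (varOf D (Finsupp.single i 1)) = Finsupp.single i 1 := by
  refine exponent_varOf D fun j => ?_
  rw [Finsupp.single_apply]
  split_ifs <;> omega

theorem varMonomial_varOf_single (hD : 1 ≤ D) (i : Fin n) :
    varMonomial D (varOf D (Finsupp.single i 1)) = (X i : MvPolynomial (Fin n) R) := by
  rw [varMonomial, exponent_varOf_single D hD]
  rfl

theorem varOf_single_injective (hD : 1 ≤ D) :
    Function.Injective fun i : Fin n => varOf D (Finsupp.single i 1) := fun i j h =>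
  Finsupp.single_left_injective one_ne_zero <| by
    simpa only [exponent_varOf_single D hD] using congrArg (exponent D) h

end BoundedExponents

section QuadratizedField

variable {n : ℕ} (D : ℕ) {R : Type*} [CommRing R] (r s : Fin n → MvPolynomial (Fin n) R)

def quadraticPart (k : Fin ((D + 1) ^ n)) : MvPolynomial (Fin ((D + 1) ^ n)) R :=
  quadraticLift D (∑ i, pderiv i (varMonomial D k) * r i)

def linearPart (k : Fin ((D + 1) ^ n)) : MvPolynomial (Fin ((D + 1) ^ n)) R :=
  linearLift D (∑ i, C (exponent D k i : R) * s i)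

def quadratizedField (k : Fin ((D + 1) ^ n)) : MvPolynomial (Fin ((D + 1) ^ n)) R :=
  quadraticPart D r k - X k * linearPart D s k

theorem quadraticPart_mem_nonnegCoeffs [PartialOrder R] [IsOrderedRing R]
    (hr : ∀ i, r i ∈ nonnegCoeffs (Fin n) R) (k : Fin ((D + 1) ^ n)) :
    quadraticPart D r k ∈ nonnegCoeffs _ R := by
  refine substMonomials_mem_nonnegCoeffs (sum_mem fun i _ => mul_mem ?_ (hr i)) fun d =>
    mul_mem (X_mem_nonnegCoeffs _) (X_mem_nonnegCoeffs _)
  rw [varMonomial, pderiv_monomial, one_mul]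
  exact monomial_mem_nonnegCoeffs _ (Nat.cast_nonneg _)

theorem linearPart_mem_nonnegCoeffs [PartialOrder R] [IsOrderedRing R]
    (hs : ∀ i, s i ∈ nonnegCoeffs (Fin n) R) (k : Fin ((D + 1) ^ n)) :
    linearPart D s k ∈ nonnegCoeffs _ R :=
  substMonomials_mem_nonnegCoeffs
    (sum_mem fun i _ => mul_mem (C_mem_nonnegCoeffs (Nat.cast_nonneg _)) (hs i))
    fun _ => X_mem_nonnegCoeffs _

theorem totalDegree_quadratizedField_le (k : Fin ((D + 1) ^ n)) :
    (quadratizedField D r s k).totalDegree ≤ 2 := by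
  have hquad : (quadraticPart D r k).totalDegree ≤ 2 :=
    totalDegree_substMonomials_le (fun _ => (totalDegree_mul _ _).trans
      (add_le_add (totalDegree_X_le _) (totalDegree_X_le _))) _
  have hlin : (linearPart D s k).totalDegree ≤ 1 :=
    totalDegree_substMonomials_le (fun _ => totalDegree_X_le _) _
  exact (totalDegree_sub _ _).trans
    (max_le hquad ((totalDegree_mul _ _).trans (add_le_add (totalDegree_X_le _) hlin)))

theorem bind₁_quadratizedField {p : Fin n → MvPolynomial (Fin n) R}
    (hp : ∀ i, p i = r i - X i * s i) (hr : ∀ i, (r i).totalDegree ≤ D)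
    (hs : ∀ i, (s i).totalDegree ≤ D) (k : Fin ((D + 1) ^ n)) :
    bind₁ (varMonomial D) (quadratizedField D r s k) = lieDeriv p (varMonomial D k) := by
  have hquad : ∀ j, (∑ i, pderiv i (varMonomial D k) * r i).degreeOf j ≤ 2 * D := fun j =>
    (degreeOf_sum_le _ _ _).trans <| Finset.sup_le fun i _ =>
      (degreeOf_mul_le _ _ _).trans <| two_mul D ▸ add_le_add
        ((degreeOf_pderiv_monomial_le _ _ _ _).trans (exponent_apply_le D k j))
        ((degreeOf_le_totalDegree _ _).trans (hr i))
  have hlin : ∀ j, (∑ i, C (exponent D k i : R) * s i).degreeOf j ≤ D := fun j =>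
    (degreeOf_sum_le _ _ _).trans <| Finset.sup_le fun i _ =>
      (degreeOf_C_mul_le _ _ _).trans ((degreeOf_le_totalDegree _ _).trans (hs i))
  rw [quadratizedField, quadraticPart, linearPart, map_sub, map_mul, bind₁_X_right,
    bind₁_quadraticLift D hquad, bind₁_linearLift D hlin, varMonomial,
    lieDeriv_monomial_of_eq_sub hp]

end QuadratizedField

end Quadratization

end

open Quadratization in
theorem stmt_8_general (n : ℕ) (p : Fin n → MvPolynomial (Fin n) ℝ)
    (hp : ∀ i : Fin n, ∃ r s : MvPolynomial (Fin n) ℝ,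
      (∀ m, 0 ≤ r.coeff m) ∧ (∀ m, 0 ≤ s.coeff m) ∧ p i = r - X i * s) :
    ∃ (m : ℕ) (_ : n ≤ m) (ι : Fin n → Fin m),
      Function.Injective ι ∧
      ∃ (P : Fin m → MvPolynomial (Fin m) ℝ) (Φ : Fin m → MvPolynomial (Fin n) ℝ),
        (∀ (y : Fin n → ℝ) (i : Fin n), eval y (Φ (ι i)) = y i) ∧
        (∀ k : Fin m, ∃ R S : MvPolynomial (Fin m) ℝ,
          (∀ d, 0 ≤ R.coeff d) ∧ (∀ d, 0 ≤ S.coeff d) ∧ P k = R - X k * S) ∧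
        (∀ k : Fin m, (P k).totalDegree ≤ 2) ∧
        (∀ x : ℝ → (Fin n → ℝ),
          (∀ (t : ℝ) (i : Fin n), HasDerivAt (fun t => x t i) (eval (x t) (p i)) t) →
          ∀ (t : ℝ) (k : Fin m),
            HasDerivAt (fun t => eval (x t) (Φ k))
              (eval (fun j => eval (x t) (Φ j)) (P k)) t) := by
  choose r s hr hs hps using hp
  obtain ⟨D, hD, hrD, hsD⟩ : ∃ D, 1 ≤ D ∧ (∀ i, (r i).totalDegree ≤ D) ∧
      ∀ i, (s i).totalDegree ≤ D := by
    have hle := fun i => Finset.single_le_sum (fun _ _ => Nat.zero_le _) (Finset.mem_univ i)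
      (f := fun i => (r i).totalDegree + (s i).totalDegree)
    exact ⟨1 + ∑ i, ((r i).totalDegree + (s i).totalDegree), by omega,
      fun i => by have := hle i; omega, fun i => by have := hle i; omega⟩
  have hι := varOf_single_injective (n := n) D hD
  refine ⟨(D + 1) ^ n, Fin.le_of_injective _ hι, _, hι, quadratizedField D r s, varMonomial D,
    fun y i => by rw [varMonomial_varOf_single D hD, eval_X],
    fun k => ⟨_, _, quadraticPart_mem_nonnegCoeffs D r hr k, linearPart_mem_nonnegCoeffs D s hs k,
      rfl⟩,
    totalDegree_quadratizedField_le D r s, fun x hx t k => ?_⟩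
  have hlie := hasDerivAt_eval_lieDeriv (hx t) (varMonomial D k)
  rwa [← bind₁_quadratizedField D r s hps hrD hsD k, eval_bind₁] at hlie

/-- Stage 1 (quadratization): any solution of a CRN-implementable polynomial
system is, via a monomial change of variables, a solution of a
CRN-implementable system of degree at most two. -/
theorem stmt_8 (n : ℕ) (hn : 1 ≤ n) (p : Fin n → MvPolynomial (Fin n) ℝ)
    (hp : ∀ i : Fin n, ∃ r s : MvPolynomial (Fin n) ℝ,
      (∀ m, 0 ≤ r.coeff m) ∧ (∀ m, 0 ≤ s.coeff m) ∧ p i = r - X i * s) :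
    ∃ (m : ℕ) (_ : n ≤ m) (ι : Fin n → Fin m),
      Function.Injective ι ∧
      ∃ (P : Fin m → MvPolynomial (Fin m) ℝ) (Φ : Fin m → MvPolynomial (Fin n) ℝ),
        (∀ (y : Fin n → ℝ) (i : Fin n), eval y (Φ (ι i)) = y i) ∧
        (∀ k : Fin m, ∃ R S : MvPolynomial (Fin m) ℝ,
          (∀ d, 0 ≤ R.coeff d) ∧ (∀ d, 0 ≤ S.coeff d) ∧ P k = R - X k * S) ∧
        (∀ k : Fin m, (P k).totalDegree ≤ 2) ∧
        (∀ x : ℝ → (Fin n → ℝ),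
          (∀ (t : ℝ) (i : Fin n), HasDerivAt (fun t => x t i) (eval (x t) (p i)) t) →
          ∀ (t : ℝ) (k : Fin m),
            HasDerivAt (fun t => eval (x t) (Φ k))
              (eval (fun j => eval (x t) (Φ j)) (P k)) t) :=
  stmt_8_general n p hp
end

section
/- Let n ≥ 1, let p : Fin n → MvPolynomial (Fin n) ℝ be such that for each i there are polynomials r_i, s_i with nonnegative coefficients, total degree of r_i at most 2, total degree of s_i at most 1, and p_i = r_i − X_i·s_i. Let x : [0, ∞) → ℝ^n be a differentiable solution of x′(t) = p(x(t)) with x(0) = 0, with x_i(t) ≥ 0 for all i and t, with all coordinates bounded, with x_1(t) ≤ 1 − c for all t for some constant c > 0, and with x_1(t) → α as t → ∞. Then there exist a polynomial vector field C : Fin (n+1) → MvPolynomial (Fin (n+1)) ℝ and a differentiable function y : [0, ∞) → ℝ^{n+1} such that: (1) each C_k is a homogeneous polynomial of degree 3 of the form A_k − X_k·B_k where A_k is a homogeneous degree-3 polynomial with nonnegative coefficients, B_k is a homogeneous degree-2 polynomial with nonnegative coefficients, and the coefficient of X_k³ in A_k is zero; (2) ∑_k C_k = 0; (3) y′(t)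 = C(y(t)) for all t ≥ 0, y_0(0) = 1 and y_k(0) = 0 for k ≠ 0, y_k(t) ≥ 0 and ∑_k y_k(t) = 1 for all t ≥ 0; and (4) y_1(t) → α as t → ∞. -/
/-!
Scale the coordinates by positive weights `w`, equal to 1 on the designated coordinate and so
small elsewhere that `∑ wᵢ xᵢ ≤ 1 - c/2`, and add the slack coordinate `z₀ = 1 - ∑ wᵢ xᵢ ≥ c/2`:
the trajectory `z` then lies on the probability simplex. There `∑ zₖ = 1`, so `rᵢ` and `sᵢ` can
be padded to forms of degrees 2 and 1 without changing their values. Multiplying the resulting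
quadratic field by `z₀` makes every component cubic and lets the slack coordinate carry the total
outflow, so the system is conservative and TPP-implementable. The factor `z₀ ∈ [c/2, 1]` is
absorbed by the time change `τ' = z₀(τ)`, which is global with `τ t ≥ c t / 2`; hence `y = z ∘ τ`
solves the cubic system and its designated coordinate is that of `x ∘ τ`, which tends to `α`.
-/

open MvPolynomial Filter

namespace MvPolynomial

section NonnegCoeffs

variable (σ R : Type*) [CommSemiring R] [PartialOrder R] [IsOrderedRing R]

def nonnegCoeffs : Subsemiring (MvPolynomial σ R) where
  carrier := {q | ∀ d, 0 ≤ q.coeff d}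
  zero_mem' _ := by simp
  one_mem' d := by
    classical
    rw [coeff_one]
    split_ifs <;> simp
  add_mem' hp hq d := by
    rw [coeff_add]
    exact add_nonneg (hp d) (hq d)
  mul_mem' hp hq d := by
    classical
    rw [coeff_mul]
    exact Finset.sum_nonneg fun _ _ => mul_nonneg (hp _) (hq _)

variable {σ R}

theorem monomial_mem_nonnegCoeffs (m : σ →₀ ℕ) {a : R} (ha : 0 ≤ a) :
    monomial m a ∈ nonnegCoeffs σ R := fun d => by
  classical
  rw [coeff_monomial]
  split_ifs <;> simp [ha]

theorem C_mem_nonnegCoeffs {a : R} (ha : 0 ≤ a) : C a ∈ nonnegCoeffs σ R :=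
  monomial_mem_nonnegCoeffs 0 ha

theorem X_mem_nonnegCoeffs (i : σ) : X i ∈ nonnegCoeffs σ R :=
  monomial_mem_nonnegCoeffs _ zero_le_one

theorem aeval_mem_nonnegCoeffs {τ : Type*} {f : σ → MvPolynomial τ R}
    (hf : ∀ i, f i ∈ nonnegCoeffs τ R) {q : MvPolynomial σ R} (hq : q ∈ nonnegCoeffs σ R) :
    aeval f q ∈ nonnegCoeffs τ R := by
  rw [aeval_def, eval₂_eq]
  exact Subsemiring.sum_mem _ fun d _ => Subsemiring.mul_mem _ (C_mem_nonnegCoeffs (hq d))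
    (Subsemiring.prod_mem _ fun i _ => Subsemiring.pow_mem _ (hf i) _)

end NonnegCoeffs

section Homogenize

variable {σ R : Type*} [Fintype σ] [CommSemiring R]

noncomputable def homogenizeBySum (d : ℕ) (q : MvPolynomial σ R) : MvPolynomial σ R :=
  ∑ m ∈ q.support, monomial m (q.coeff m) * (∑ j, X j) ^ (d - m.degree)

theorem isHomogeneous_homogenizeBySum {d : ℕ} {q : MvPolynomial σ R} (hq : q.totalDegree ≤ d) :
    (homogenizeBySum d q).IsHomogeneous d := by
  refine IsHomogeneous.sum _ _ _ fun m hm => ?_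
  have hsum : (∑ j, X j : MvPolynomial σ R).IsHomogeneous 1 :=
    IsHomogeneous.sum _ _ _ fun j _ => isHomogeneous_X _ _
  convert (isHomogeneous_monomial (q.coeff m) rfl).mul (hsum.pow (d - m.degree)) using 1
  have : m.degree ≤ d := (le_totalDegree hm).trans hq
  omega

theorem eval_homogenizeBySum (d : ℕ) (q : MvPolynomial σ R) {v : σ → R} (hv : ∑ j, v j = 1) :
    eval v (homogenizeBySum d q) = eval v q := by
  simp only [homogenizeBySum, map_sum, map_mul, map_pow, eval_X, hv, one_pow, mul_one]
  rw [← map_sum, ← as_sum]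

theorem homogenizeBySum_mem_nonnegCoeffs [PartialOrder R] [IsOrderedRing R] (d : ℕ)
    {q : MvPolynomial σ R} (hq : q ∈ nonnegCoeffs σ R) :
    homogenizeBySum d q ∈ nonnegCoeffs σ R :=
  Subsemiring.sum_mem _ fun m _ => Subsemiring.mul_mem _ (monomial_mem_nonnegCoeffs m (hq m))
    (Subsemiring.pow_mem _ (Subsemiring.sum_mem _ fun j _ => X_mem_nonnegCoeffs j) _)

end Homogenize

theorem totalDegree_aeval_le {σ τ R : Type*} [CommSemiring R] {f : σ → MvPolynomial τ R}
    (hf : ∀ i, (f i).IsHomogeneous 1) (q : MvPolynomial σ R) :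
    (aeval f q).totalDegree ≤ q.totalDegree := by
  conv_lhs => rw [← sum_homogeneousComponent q]
  rw [map_sum]
  refine (totalDegree_finsetSum _ _).trans (Finset.sup_le fun j hj => ?_)
  have := ((homogeneousComponent_isHomogeneous j q).aeval f hf).totalDegree_le
  rw [Finset.mem_range] at hj
  omega

theorem coeff_single_X_mul_eq_zero {σ R : Type*} [CommSemiring R] {i k : σ} (h : i ≠ k) (e : ℕ)
    (p : MvPolynomial σ R) : (X i * p).coeff (Finsupp.single k e) = 0 := by
  classical
  rw [coeff_X_mul', if_neg]
  simp [h.symm]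

section CubicForm

variable {σ R : Type*} [CommRing R] [PartialOrder R] [IsOrderedRing R]

def IsTPPCubicComponent (k : σ) (q : MvPolynomial σ R) : Prop :=
  ∃ A B : MvPolynomial σ R, A ∈ nonnegCoeffs σ R ∧ B ∈ nonnegCoeffs σ R ∧
    A.IsHomogeneous 3 ∧ B.IsHomogeneous 2 ∧ A.coeff (Finsupp.single k 3) = 0 ∧ q = A - X k * B

theorem IsTPPCubicComponent.isHomogeneous {k : σ} {q : MvPolynomial σ R}
    (h : IsTPPCubicComponent k q) : q.IsHomogeneous 3 := by
  obtain ⟨A, B, -, -, hA, hB, -, rfl⟩ := h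
  exact hA.sub ((isHomogeneous_X R k).mul hB)

end CubicForm

section BalancedCubic

variable {n : ℕ} {R : Type*} [CommRing R]

/-- Component `i+1` is `X₀ (Pᵢ - X_{i+1} Qᵢ)` and component `0` minus their sum, written so
that each positive part visibly lacks the cube of its own variable. -/
noncomputable def balancedCubic (P Q : Fin n → MvPolynomial (Fin (n + 1)) R) :
    Fin (n + 1) → MvPolynomial (Fin (n + 1)) R :=
  Fin.cons (∑ i, X i.succ * (X 0 * Q i) - X 0 * ∑ i, P i)
    fun i => X 0 * P i - X i.succ * (X 0 * Q i)

variable (P Q : Fin n → MvPolynomial (Fin (n + 1)) R)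

theorem balancedCubic_zero :
    balancedCubic P Q 0 = -(X 0 * ∑ i, (P i - X i.succ * Q i)) := by
  simp only [balancedCubic, Fin.cons_zero, Finset.mul_sum, ← Finset.sum_sub_distrib,
    ← Finset.sum_neg_distrib]
  exact Finset.sum_congr rfl fun i _ => by ring

theorem balancedCubic_succ (i : Fin n) :
    balancedCubic P Q i.succ = X 0 * (P i - X i.succ * Q i) := by
  simp only [balancedCubic, Fin.cons_succ]
  ring

theorem sum_balancedCubic : ∑ k, balancedCubic P Q k = 0 := by
  rw [Fin.sum_univ_succ, balancedCubic_zero]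
  simp only [balancedCubic_succ, Finset.mul_sum]
  exact neg_add_cancel _

theorem isTPPCubicComponent_balancedCubic [PartialOrder R] [IsOrderedRing R]
    {P Q : Fin n → MvPolynomial (Fin (n + 1)) R}
    (hP : ∀ i, P i ∈ nonnegCoeffs _ R) (hQ : ∀ i, Q i ∈ nonnegCoeffs _ R)
    (hP₂ : ∀ i, (P i).IsHomogeneous 2) (hQ₁ : ∀ i, (Q i).IsHomogeneous 1) (k : Fin (n + 1)) :
    IsTPPCubicComponent k (balancedCubic P Q k) := by
  have hX := X_mem_nonnegCoeffs (σ := Fin (n + 1)) (R := R)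
  have hXQ : ∀ i, (X 0 * Q i).IsHomogeneous 2 := fun i => (isHomogeneous_X R 0).mul (hQ₁ i)
  cases k using Fin.cases with
  | zero =>
    refine ⟨∑ i, X i.succ * (X 0 * Q i), ∑ i, P i,
      Subsemiring.sum_mem _ fun i _ =>
        Subsemiring.mul_mem _ (hX _) (Subsemiring.mul_mem _ (hX _) (hQ i)),
      Subsemiring.sum_mem _ fun i _ => hP i,
      IsHomogeneous.sum _ _ _ fun i _ => (isHomogeneous_X R _).mul (hXQ i),
      IsHomogeneous.sum _ _ _ fun i _ => hP₂ i, ?_, rfl⟩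
    rw [coeff_sum]
    exact Finset.sum_eq_zero fun i _ => coeff_single_X_mul_eq_zero i.succ_ne_zero _ _
  | succ i =>
    exact ⟨X 0 * P i, X 0 * Q i, Subsemiring.mul_mem _ (hX _) (hP i),
      Subsemiring.mul_mem _ (hX _) (hQ i), (isHomogeneous_X R 0).mul (hP₂ i), hXQ i,
      coeff_single_X_mul_eq_zero i.succ_ne_zero.symm _ _, rfl⟩

end BalancedCubic

end MvPolynomial

theorem exists_orderIso_hasDerivAt_inv {g : ℝ → ℝ} (hg : Continuous g) {a b : ℝ} (ha : 0 < a)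
    (hga : ∀ u, a ≤ g u) (hgb : ∀ u, g u ≤ b) :
    ∃ E : ℝ ≃o ℝ, E 0 = 0 ∧ (∀ u, HasDerivAt E (g u)⁻¹ u) ∧ ∀ u, 0 ≤ u → E u ≤ a⁻¹ * u := by
  have hg_pos : ∀ u, 0 < g u := fun u => ha.trans_le (hga u)
  have hb : 0 < b := (hg_pos 0).trans_le (hgb 0)
  set G : ℝ → ℝ := fun u => ∫ v in (0 : ℝ)..u, (g v)⁻¹
  have hg_inv : Continuous fun u => (g u)⁻¹ := hg.inv₀ fun u => (hg_pos u).ne'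
  have hG : ∀ u, HasDerivAt G (g u)⁻¹ u := fun u =>
    intervalIntegral.integral_hasDerivAt_right (hg_inv.intervalIntegrable _ _)
      hg_inv.aestronglyMeasurable.stronglyMeasurableAtFilter hg_inv.continuousAt
  have hG_diff : Differentiable ℝ G := fun u => (hG u).differentiableAt
  have hG0 : G 0 = 0 := intervalIntegral.integral_same
  have hG_lower : ∀ u v, u ≤ v → b⁻¹ * (v - u) ≤ G v - G u :=
    mul_sub_le_image_sub_of_le_deriv hG_diff fun u =>
      (hG u).deriv ▸ inv_anti₀ (hg_pos u) (hgb u)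
  have hG_upper : ∀ u v, u ≤ v → G v - G u ≤ a⁻¹ * (v - u) :=
    image_sub_le_mul_sub_of_deriv_le hG_diff fun u => (hG u).deriv ▸ inv_anti₀ ha (hga u)
  have hG_mono : StrictMono G := fun u v huv => by
    nlinarith [hG_lower u v huv.le, inv_pos.2 hb]
  have hG_surj : Function.Surjective G := by
    refine hG_diff.continuous.surjective ?_ ?_
    · refine tendsto_atTop_mono' _ ?_ (tendsto_id.const_mul_atTop (inv_pos.2 hb))
      filter_upwards [eventually_ge_atTop 0] with u hu
      simpa [hG0] using hG_lower 0 u hu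
    · refine tendsto_atBot_mono' _ ?_ (tendsto_id.const_mul_atBot (inv_pos.2 hb))
      filter_upwards [eventually_le_atBot 0] with u hu
      have := hG_lower u 0 hu
      rw [hG0] at this
      simp only [id]
      linarith
  exact ⟨hG_mono.orderIsoOfSurjective G hG_surj, hG0, hG,
    fun u hu => by simpa [hG0] using hG_upper 0 u hu⟩

theorem exists_hasDerivAt_eq_comp {g : ℝ → ℝ} (hg : Continuous g) {a b : ℝ} (ha : 0 < a)
    (hga : ∀ u, a ≤ g u) (hgb : ∀ u, g u ≤ b) :
    ∃ τ : ℝ → ℝ, τ 0 = 0 ∧ (∀ t, HasDerivAt τ (g (τ t)) t) ∧ ∀ t, 0 ≤ t → a * t ≤ τ t := by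
  obtain ⟨E, hE0, hE, hE_le⟩ := exists_orderIso_hasDerivAt_inv hg ha hga hgb
  have hτ0 : E.symm 0 = 0 := E.symm_apply_eq.2 hE0.symm
  refine ⟨E.symm, hτ0, fun t => ?_, fun t ht => ?_⟩
  · simpa using (hE _).of_local_left_inverse E.symm.continuous.continuousAt
      (inv_ne_zero (ha.trans_le (hga _)).ne') (Eventually.of_forall E.apply_symm_apply)
  · have := hE_le _ (hτ0 ▸ E.symm.monotone ht)
    rw [E.apply_symm_apply] at this
    exact (le_inv_mul_iff₀ ha).1 this

theorem exists_hasDerivAt_eq_comp_of_continuousOn {g : ℝ → ℝ} (hg : ContinuousOn g (Set.Ici 0))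
    {a b : ℝ} (ha : 0 < a) (hga : ∀ u, 0 ≤ u → a ≤ g u) (hgb : ∀ u, 0 ≤ u → g u ≤ b) :
    ∃ τ : ℝ → ℝ, τ 0 = 0 ∧ ∀ t, 0 ≤ t → HasDerivAt τ (g (τ t)) t ∧ a * t ≤ τ t := by
  obtain ⟨τ, hτ0, hτ, hτ_ge⟩ := exists_hasDerivAt_eq_comp
    (hg.comp_continuous (continuous_id.max continuous_const) fun u => le_max_right u 0) ha
    (fun u => hga _ (le_max_right u 0)) (fun u => hgb _ (le_max_right u 0))
  refine ⟨τ, hτ0, fun t ht => ⟨?_, hτ_ge t ht⟩⟩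
  have hτ_nonneg : 0 ≤ τ t := (mul_nonneg ha.le ht).trans (hτ_ge t ht)
  simpa [max_eq_left hτ_nonneg] using hτ t

section SimplexLift

variable {n : ℕ} (w : Fin n → ℝ)

def toSimplex (v : Fin n → ℝ) : Fin (n + 1) → ℝ :=
  Fin.cons (1 - ∑ i, w i * v i) fun i => w i * v i

def simplexVelocity (v' : Fin n → ℝ) : Fin (n + 1) → ℝ :=
  Fin.cons (-∑ i, w i * v' i) fun i => w i * v' i

theorem sum_toSimplex (v : Fin n → ℝ) : ∑ k, toSimplex w v k = 1 := by
  simp [toSimplex, Fin.sum_univ_succ]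

theorem toSimplex_zero : toSimplex w 0 = Pi.single 0 1 := by
  ext k
  cases k using Fin.cases <;> simp [toSimplex]

theorem toSimplex_zero_mem_Icc {v : Fin n → ℝ} (hw : ∀ i, 0 ≤ w i) (hv : ∀ i, 0 ≤ v i) {ε : ℝ}
    (h : ∑ i, w i * v i ≤ 1 - ε) : toSimplex w v 0 ∈ Set.Icc ε 1 := by
  have := Finset.sum_nonneg fun i (_ : i ∈ Finset.univ) => mul_nonneg (hw i) (hv i)
  simp only [toSimplex, Fin.cons_zero, Set.mem_Icc]
  constructor <;> linarith

theorem toSimplex_nonneg {v : Fin n → ℝ} (hw : ∀ i, 0 ≤ w i) (hv : ∀ i, 0 ≤ v i)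
    (h : ∑ i, w i * v i ≤ 1) (k : Fin (n + 1)) : 0 ≤ toSimplex w v k := by
  cases k using Fin.cases with
  | zero => simpa [toSimplex] using h
  | succ i => exact mul_nonneg (hw i) (hv i)

theorem hasDerivAt_toSimplex {x : ℝ → Fin n → ℝ} {x' : Fin n → ℝ} {u : ℝ}
    (hx : ∀ i, HasDerivAt (fun t => x t i) (x' i) u) (k : Fin (n + 1)) :
    HasDerivAt (fun t => toSimplex w (x t) k) (simplexVelocity w x' k) u := by
  cases k using Fin.cases with
  | zero =>
    simpa [toSimplex, simplexVelocity] using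
      (HasDerivAt.fun_sum fun i _ => (hx i).const_mul (w i)).const_sub 1
  | succ i => simpa [toSimplex, simplexVelocity] using (hx i).const_mul (w i)

noncomputable def unscale : Fin n → MvPolynomial (Fin (n + 1)) ℝ :=
  fun i => C (w i)⁻¹ * X i.succ

variable {w}

theorem eval_aeval_unscale (hw : ∀ i, w i ≠ 0) (v : Fin n → ℝ) (q : MvPolynomial (Fin n) ℝ) :
    eval (toSimplex w v) (aeval (unscale w) q) = eval v q := by
  rw [aeval_eq_bind₁, eval, eval₂Hom_bind₁]
  congr
  funext i
  simp [unscale, toSimplex, inv_mul_cancel_left₀ (hw i)]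

variable (w) in
noncomputable def cubicLift (r s : Fin n → MvPolynomial (Fin n) ℝ) :
    Fin (n + 1) → MvPolynomial (Fin (n + 1)) ℝ :=
  balancedCubic (fun i => C (w i) * homogenizeBySum 2 (aeval (unscale w) (r i)))
    (fun i => homogenizeBySum 1 (aeval (unscale w) (s i)))

variable {r s : Fin n → MvPolynomial (Fin n) ℝ}

theorem isTPPCubicComponent_cubicLift (hw : ∀ i, 0 < w i)
    (hr : ∀ i, r i ∈ nonnegCoeffs _ ℝ) (hs : ∀ i, s i ∈ nonnegCoeffs _ ℝ)
    (hr₂ : ∀ i, (r i).totalDegree ≤ 2) (hs₁ : ∀ i, (s i).totalDegree ≤ 1) (k : Fin (n + 1)) :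
    IsTPPCubicComponent k (cubicLift w r s k) := by
  have hunscale : ∀ i, unscale w i ∈ nonnegCoeffs _ ℝ := fun i =>
    Subsemiring.mul_mem _ (C_mem_nonnegCoeffs (inv_nonneg.2 (hw i).le)) (X_mem_nonnegCoeffs _)
  have hdeg : ∀ q : MvPolynomial (Fin n) ℝ, (aeval (unscale w) q).totalDegree ≤ q.totalDegree :=
    totalDegree_aeval_le fun i => (isHomogeneous_X ℝ _).C_mul _
  refine isTPPCubicComponent_balancedCubic (fun i => ?_) (fun i => ?_) (fun i => ?_)
    (fun i => ?_) k
  · exact Subsemiring.mul_mem _ (C_mem_nonnegCoeffs (hw i).le)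
      (homogenizeBySum_mem_nonnegCoeffs _ (aeval_mem_nonnegCoeffs hunscale (hr i)))
  · exact homogenizeBySum_mem_nonnegCoeffs _ (aeval_mem_nonnegCoeffs hunscale (hs i))
  · exact (isHomogeneous_homogenizeBySum ((hdeg _).trans (hr₂ i))).C_mul _
  · exact isHomogeneous_homogenizeBySum ((hdeg _).trans (hs₁ i))

theorem eval_toSimplex_cubicLift (hw : ∀ i, w i ≠ 0) (v : Fin n → ℝ) (k : Fin (n + 1)) :
    eval (toSimplex w v) (cubicLift w r s k) =
      toSimplex w v 0 * simplexVelocity w (fun i => eval v (r i - X i * s i)) k := by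
  have key : ∀ i, eval (toSimplex w v)
      (C (w i) * homogenizeBySum 2 (aeval (unscale w) (r i)) -
        X i.succ * homogenizeBySum 1 (aeval (unscale w) (s i))) =
      w i * eval v (r i - X i * s i) := by
    intro i
    simp only [map_sub, map_mul, eval_C, eval_X, eval_homogenizeBySum _ _ (sum_toSimplex w v),
      eval_aeval_unscale hw]
    simp only [toSimplex, Fin.cons_succ]
    ring
  cases k using Fin.cases with
  | zero => simp only [cubicLift, balancedCubic_zero, map_neg, map_mul, eval_X, map_sum, key,
      simplexVelocity, Fin.cons_zero, mul_neg]
  | succ i => simp only [cubicLift, balancedCubic_succ, map_mul, eval_X, key, simplexVelocity,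
      Fin.cons_succ]

theorem hasDerivAt_toSimplex_comp (hw : ∀ i, w i ≠ 0) {x : ℝ → Fin n → ℝ} {τ : ℝ → ℝ} {t : ℝ}
    (hx : ∀ i, HasDerivAt (fun u => x u i) (eval (x (τ t)) (r i - X i * s i)) (τ t))
    (hτ : HasDerivAt τ (toSimplex w (x (τ t)) 0) t) (k : Fin (n + 1)) :
    HasDerivAt (fun t => toSimplex w (x (τ t)) k)
      (eval (toSimplex w (x (τ t))) (cubicLift w r s k)) t := by
  rw [eval_toSimplex_cubicLift hw, mul_comm]
  exact (hasDerivAt_toSimplex w hx k).comp t hτ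

end SimplexLift

theorem exists_weights_sum_mul_le {ι : Type*} [Fintype ι] [DecidableEq ι] (i₀ : ι) (B : ℝ)
    {c : ℝ} (hc : 0 < c) :
    ∃ w : ι → ℝ, (∀ i, 0 < w i) ∧ w i₀ = 1 ∧ ∀ v : ι → ℝ, (∀ i, 0 ≤ v i) → (∀ i, v i ≤ B) →
      v i₀ ≤ 1 - c → ∑ i, w i * v i ≤ 1 - c / 2 := by
  obtain ⟨l, hl, hlB⟩ := exists_pos_mul_lt (half_pos hc) (Fintype.card ι * B)
  refine ⟨fun i => if i = i₀ then 1 else l, fun i => by dsimp only; split_ifs <;> simp [hl],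
    if_pos rfl, fun v hv hvB hv₀ => ?_⟩
  have hsum : ∑ i, v i ≤ Fintype.card ι * B := by
    simpa using Finset.sum_le_card_nsmul Finset.univ v B fun i _ => hvB i
  calc ∑ i, (if i = i₀ then 1 else l) * v i
      ≤ ∑ i, ((if i = i₀ then v i else 0) + l * v i) :=
        Finset.sum_le_sum fun i _ => by split_ifs <;> nlinarith [hv i]
    _ = v i₀ + l * ∑ i, v i := by
        rw [Finset.sum_add_distrib, Finset.sum_ite_eq', Finset.mul_sum, if_pos (Finset.mem_univ _)]
    _ ≤ 1 - c / 2 := by nlinarith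

/-- Stage 2: a bounded quadratic CRN-implementable system initialized at zero
that computes `α` in its first coordinate can be converted into a
TPP-implementable cubic form system on the probability simplex computing the
same number. -/
theorem stmt_9 (n : ℕ) (hn : 0 < n) (p : Fin n → MvPolynomial (Fin n) ℝ)
    (hp : ∀ i : Fin n, ∃ r s : MvPolynomial (Fin n) ℝ,
      (∀ m, 0 ≤ r.coeff m) ∧ (∀ m, 0 ≤ s.coeff m) ∧
      r.totalDegree ≤ 2 ∧ s.totalDegree ≤ 1 ∧ p i = r - X i * s)
    (x : ℝ → (Fin n → ℝ))
    (hode : ∀ t : ℝ, 0 ≤ t → ∀ i : Fin n,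
      HasDerivAt (fun t => x t i) (eval (x t) (p i)) t)
    (hx0 : ∀ i : Fin n, x 0 i = 0)
    (hpos : ∀ t : ℝ, 0 ≤ t → ∀ i : Fin n, 0 ≤ x t i)
    (hbd : ∃ B : ℝ, ∀ t : ℝ, 0 ≤ t → ∀ i : Fin n, x t i ≤ B)
    (c : ℝ) (hc : 0 < c)
    (hx1bd : ∀ t : ℝ, 0 ≤ t → x t ⟨0, hn⟩ ≤ 1 - c)
    (α : ℝ)
    (hlim : Tendsto (fun t => x t ⟨0, hn⟩) atTop (nhds α)) :
    ∃ (C : Fin (n + 1) → MvPolynomial (Fin (n + 1)) ℝ)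
      (y : ℝ → (Fin (n + 1) → ℝ)),
      (∀ k : Fin (n + 1), ∃ A B : MvPolynomial (Fin (n + 1)) ℝ,
        (∀ d, 0 ≤ A.coeff d) ∧ (∀ d, 0 ≤ B.coeff d) ∧
        A.IsHomogeneous 3 ∧ B.IsHomogeneous 2 ∧
        A.coeff (Finsupp.single k 3) = 0 ∧
        C k = A - X k * B) ∧
      (∀ k : Fin (n + 1), (C k).IsHomogeneous 3) ∧
      (∑ k : Fin (n + 1), C k) = 0 ∧
      (∀ t : ℝ, 0 ≤ t → ∀ k : Fin (n + 1),
        HasDerivAt (fun t => y t k) (eval (y t) (C k)) t) ∧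
      y 0 0 = 1 ∧ (∀ k : Fin (n + 1), k ≠ 0 → y 0 k = 0) ∧
      (∀ t : ℝ, 0 ≤ t → ∀ k : Fin (n + 1), 0 ≤ y t k) ∧
      (∀ t : ℝ, 0 ≤ t → (∑ k : Fin (n + 1), y t k) = 1) ∧
      Tendsto (fun t => y t 1) atTop (nhds α) := by
  choose r s hr hs hr₂ hs₁ hp using hp
  obtain ⟨B, hB⟩ := hbd
  obtain ⟨w, hw, hw₀, hw_sum⟩ := exists_weights_sum_mul_le (⟨0, hn⟩ : Fin n) B hc
  have hsum : ∀ t, 0 ≤ t → ∑ i, w i * x t i ≤ 1 - c / 2 :=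
    fun t ht => hw_sum _ (hpos t ht) (hB t ht) (hx1bd t ht)
  have hz₀ : ∀ t, 0 ≤ t → toSimplex w (x t) 0 ∈ Set.Icc (c / 2) 1 :=
    fun t ht => toSimplex_zero_mem_Icc w (fun i => (hw i).le) (hpos t ht) (hsum t ht)
  obtain ⟨τ, hτ0, hτ⟩ := exists_hasDerivAt_eq_comp_of_continuousOn
    (fun t ht => (hasDerivAt_toSimplex w (hode t ht) 0).continuousAt.continuousWithinAt)
    (half_pos hc) (fun t ht => (hz₀ t ht).1) (fun t ht => (hz₀ t ht).2)
  have hτ_nonneg : ∀ t, 0 ≤ t → 0 ≤ τ t :=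
    fun t ht => (mul_nonneg (half_pos hc).le ht).trans (hτ t ht).2
  have hτ_top : Tendsto τ atTop atTop := tendsto_atTop_mono' _
    ((eventually_ge_atTop 0).mono fun t ht => (hτ t ht).2)
    (tendsto_id.const_mul_atTop (half_pos hc))
  have hy0 : toSimplex w (x (τ 0)) = Pi.single 0 1 := by
    rw [hτ0, show x 0 = 0 from funext hx0, toSimplex_zero]
  have hTPP := isTPPCubicComponent_cubicLift hw hr hs hr₂ hs₁
  refine ⟨cubicLift w r s, fun t => toSimplex w (x (τ t)), hTPP, fun k => (hTPP k).isHomogeneous,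
    sum_balancedCubic _ _, fun t ht k => ?_, by simp [hy0], fun k hk => by simp [hy0, hk],
    fun t ht => toSimplex_nonneg w (fun i => (hw i).le) (hpos _ (hτ_nonneg t ht))
      ((hsum _ (hτ_nonneg t ht)).trans (by linarith)),
    fun t _ => sum_toSimplex w _, ?_⟩
  · exact hasDerivAt_toSimplex_comp (fun i => (hw i).ne')
      (fun i => hp i ▸ hode _ (hτ_nonneg t ht) i) (hτ t ht).1 k
  · have h1 : (1 : Fin (n + 1)) = Fin.succ ⟨0, hn⟩ := Fin.ext (Nat.one_mod_eq_one.2 (by omega))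
    simp only [h1, toSimplex, Fin.cons_succ, hw₀, one_mul]
    exact hlim.comp hτ_top
end

section
/- Let N ≥ 1, let C : Fin N → MvPolynomial (Fin N) ℝ be such that each C_k is a homogeneous polynomial of degree 3 of the form A_k − X_k·B_k with A_k, B_k having nonnegative coefficients and the coefficient of X_k³ in A_k being zero, with ∑_k C_k = 0, and let y : [0, ∞) → ℝ^N be a differentiable solution of y′ = C(y) with y_k(t) ≥ 0 and ∑_k y_k(t) = 1 for all t, with y(0) equal to a standard basis vector, and with y_1(t) → α as t → ∞ for a designated coordinate 1. Then there exist a polynomial vector field D indexed by pairs (i,j) ∈ Fin N × Fin N over the variables Z_{(i,j)} and a differentiable function z : [0, ∞) → ℝ^{N×N} with z_{(i,j)}(t) = y_i(t)·y_j(t), such that: (1) each D_{(i,j)} is a homogeneous polynomial of degree 2 of the form P_{(i,j)} − Z_{(i,j)}·Q_{(i,j)} where P_{(i,j)} is a homogeneous degree-2 polynomial with nonnegative coefficients whose coefficient of Z_{(i,j)}² is zero and Q_{(i,j)} is a homogeneous degree-1 polynomial with nonnegative coefficients; (2) ∑_{(i,j)} D_{(i,j)} = 0; (3) z′(t) = D(z(t))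 for all t, z(0) is a standard basis vector, z_{(i,j)}(t) ≥ 0 and ∑_{(i,j)} z_{(i,j)}(t) = 1 for all t; and (4) ∑_{j} z_{(1,j)}(t) → α as t → ∞. -/
open MvPolynomial Filter

/-!
Write `C_k = A_k - x_k B_k`. Along `z_(i,j) = y_i y_j` we have
`z_(i,j)' = G_(i,j)(y) - y_i y_j L_(i,j)(y)` with quartics `G_(i,j) = A_i x_j + x_i A_j` and
quadrics `L_(i,j) = B_i + B_j`, and `∑ (G_(i,j) - x_i x_j L_(i,j)) = 2 (∑ C_k) (∑ x_k) = 0`.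
Lifting each quartic monomial of `G` to some `z_p z_q`, and `x_i x_j L` to `z_(i,j)` times a
linear form, gives components of the shape `P - z_(i,j) Q` with the right values at `(y_i y_j)`,
but conservative only modulo the Segre relations `z_r z_s = z_p z_q`. Adding, for each lifted
loss monomial `z_r z_s`, the exchange `z_r z_s - z_p z_q` (with `z_p z_q` the lift of the same
quartic monomial) to the component of `z_p` makes the system exactly conservative, keeps the PP
shape, and vanishes at `(y_i y_j)`.
-/

theorem MvPolynomial.IsHomogeneous.degree_eq_of_mem_support {σ R : Type*} [CommSemiring R]
    {P : MvPolynomial σ R} {n : ℕ} (hP : P.IsHomogeneous n) {m : σ →₀ ℕ}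
    (hm : m ∈ P.support) : m.degree = n :=
  by_contra fun h => mem_support_iff.1 hm (hP.coeff_eq_zero h)

namespace SelfProduct

section Nonneg

variable {σ R : Type*} [CommRing R] [PartialOrder R] [IsOrderedRing R]

theorem coeff_mul_nonneg {p q : MvPolynomial σ R} (hp : ∀ m, 0 ≤ p.coeff m)
    (hq : ∀ m, 0 ≤ q.coeff m) (m : σ →₀ ℕ) : 0 ≤ (p * q).coeff m := by
  classical
  rw [coeff_mul]
  exact Finset.sum_nonneg fun x _ => mul_nonneg (hp _) (hq _)

theorem coeff_X_nonneg (i : σ) (m : σ →₀ ℕ) : 0 ≤ (X i : MvPolynomial σ R).coeff m := by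
  classical
  rw [coeff_X]
  split_ifs <;> simp

end Nonneg

section Exponents

variable {σ : Type*}

noncomputable def pairExp (p : σ × σ) : σ →₀ ℕ :=
  Finsupp.single p.1 1 + Finsupp.single p.2 1

@[simp]
theorem degree_pairExp (p : σ × σ) : (pairExp p).degree = 2 := by
  simp [pairExp]

open scoped Pointwise in
theorem exists_pairExp_eq {b : σ →₀ ℕ} (hb : b.degree = 2) : ∃ p, pairExp p = b := by
  have hb' : b ∈ 2 • (fun a => Finsupp.single a 1) '' (Set.univ : Set σ) := by
    rw [Finsupp.nsmul_single_one_image]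
    exact ⟨hb, Set.subset_univ _⟩
  obtain ⟨_, ⟨a, -, rfl⟩, _, ⟨c, -, rfl⟩, hac⟩ :=
    Set.mem_add.1 (by rwa [two_nsmul] at hb')
  exact ⟨(a, c), hac⟩

/-- The second clause makes `x_i ^ 2 * x_j ^ 2` with `i ≠ j` split as `(i, i), (j, j)`, so that no
quartic monomial is lifted to `z_(i,j) ^ 2` unless it is `x_i ^ 4`. -/
def Splits (m : σ →₀ ℕ) (pq : (σ × σ) × (σ × σ)) : Prop :=
  pairExp pq.1 + pairExp pq.2 = m ∧ (pq.1 = pq.2 → pq.1.1 = pq.1.2)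

open scoped Pointwise in
theorem exists_splits {m : σ →₀ ℕ} (hm : m.degree = 4) : ∃ pq, Splits m pq := by
  have hm' : m ∈ Finsupp.degree ⁻¹' ({2} + {2} : Set ℕ) := by simpa using hm
  rw [Finsupp.degree_preimage_add] at hm'
  obtain ⟨b, hb, c, hc, rfl⟩ := Set.mem_add.1 hm'
  obtain ⟨p, rfl⟩ := exists_pairExp_eq hb
  obtain ⟨q, rfl⟩ := exists_pairExp_eq hc
  by_cases hpq : p = q ∧ p.1 ≠ p.2
  · refine ⟨((p.1, p.1), (p.2, p.2)), ?_, fun _ => rfl⟩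
    rw [← hpq.1]
    simp only [pairExp]
    abel
  · exact ⟨(p, q), rfl, fun h => not_and_not_right.1 hpq h⟩

theorem eq_of_single_add_single_eq_single_two {a b c : σ}
    (h : Finsupp.single a 1 + Finsupp.single b 1 = Finsupp.single c 2) : a = c ∧ b = c := by
  rw [show (2 : ℕ) = 1 + 1 from rfl, Finsupp.single_add] at h
  rcases (Finsupp.single_add_single_eq_single_add_single one_ne_zero one_ne_zero).1 h with
    h | ⟨-, h⟩ | ⟨h, -⟩
  · exact h
  · exact h
  · exact absurd h (by norm_num)

theorem coeff_X_mul_X_single_two {R : Type*} [CommRing R] {p q v : σ}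
    (h : ¬(p = v ∧ q = v)) : (X p * X q : MvPolynomial σ R).coeff (Finsupp.single v 2) = 0 := by
  classical
  rw [X, X, monomial_mul, mul_one, coeff_monomial,
    if_neg fun h' => h (eq_of_single_add_single_eq_single_two h')]

end Exponents

section PPComponent

variable {ι R : Type*} [CommRing R] [PartialOrder R]

def IsPPComponent (v : ι) (D : MvPolynomial ι R) : Prop :=
  ∃ P Q : MvPolynomial ι R,
    (∀ e, 0 ≤ P.coeff e) ∧ (∀ e, 0 ≤ Q.coeff e) ∧
    P.IsHomogeneous 2 ∧ Q.IsHomogeneous 1 ∧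
    P.coeff (Finsupp.single v 2) = 0 ∧ D = P - X v * Q

namespace IsPPComponent

variable {v : ι}

theorem zero : IsPPComponent v (0 : MvPolynomial ι R) :=
  ⟨0, 0, fun _ => le_rfl, fun _ => le_rfl, isHomogeneous_zero _ _ _, isHomogeneous_zero _ _ _,
    coeff_zero _, by simp⟩

theorem add [IsOrderedRing R] {D D' : MvPolynomial ι R} (hD : IsPPComponent v D)
    (hD' : IsPPComponent v D') : IsPPComponent v (D + D') := by
  obtain ⟨P, Q, hP, hQ, hP2, hQ1, hPv, rfl⟩ := hD
  obtain ⟨P', Q', hP', hQ', hP2', hQ1', hPv', rfl⟩ := hD'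
  refine ⟨P + P', Q + Q', fun e => ?_, fun e => ?_, hP2.add hP2', hQ1.add hQ1', ?_, by ring⟩
  · rw [coeff_add]; exact add_nonneg (hP e) (hP' e)
  · rw [coeff_add]; exact add_nonneg (hQ e) (hQ' e)
  · rw [coeff_add, hPv, hPv', add_zero]

theorem sum [IsOrderedRing R] {α : Type*} {s : Finset α} {D : α → MvPolynomial ι R}
    (hD : ∀ a ∈ s, IsPPComponent v (D a)) : IsPPComponent v (∑ a ∈ s, D a) := by
  classical
  induction s using Finset.induction_on with
  | empty => simpa using zero
  | insert a s ha ih =>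
    rw [Finset.sum_insert ha]
    exact (hD a (Finset.mem_insert_self a s)).add
      (ih fun b hb => hD b (Finset.mem_insert_of_mem hb))

theorem smul [IsOrderedRing R] {D : MvPolynomial ι R} (hD : IsPPComponent v D) {c : R}
    (hc : 0 ≤ c) : IsPPComponent v (c • D) := by
  obtain ⟨P, Q, hP, hQ, hP2, hQ1, hPv, rfl⟩ := hD
  refine ⟨c • P, c • Q, fun e => ?_, fun e => ?_, ?_, ?_, ?_,
    by rw [smul_sub, mul_smul_comm]⟩
  · rw [coeff_smul]; exact mul_nonneg hc (hP e)
  · rw [coeff_smul]; exact mul_nonneg hc (hQ e)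
  · simpa [smul_eq_C_mul] using hP2.C_mul c
  · simpa [smul_eq_C_mul] using hQ1.C_mul c
  · rw [coeff_smul, hPv, smul_zero]

theorem isHomogeneous {D : MvPolynomial ι R} (hD : IsPPComponent v D) : D.IsHomogeneous 2 := by
  obtain ⟨P, Q, -, -, hP2, hQ1, -, rfl⟩ := hD
  exact hP2.sub ((isHomogeneous_X R v).mul hQ1)

end IsPPComponent

end PPComponent

section Lift

variable {σ τ R : Type*} [CommRing R]

noncomputable def liftPoly (f : (σ →₀ ℕ) → MvPolynomial τ R) :
    MvPolynomial σ R →ₗ[R] MvPolynomial τ R :=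
  (basisMonomials σ R).constr R f

variable (f : (σ →₀ ℕ) → MvPolynomial τ R)

theorem liftPoly_apply (P : MvPolynomial σ R) :
    liftPoly f P = ∑ m ∈ P.support, P.coeff m • f m := by
  rw [liftPoly, Module.Basis.constr_apply]
  rfl

theorem liftPoly_monomial (m : σ →₀ ℕ) (c : R) : liftPoly f (monomial m c) = c • f m := by
  have h : liftPoly f (monomial m 1) = f m := (basisMonomials σ R).constr_basis R f m
  rw [← h, ← map_smul, smul_monomial, smul_eq_mul, mul_one]

theorem isHomogeneous_liftPoly {n : ℕ} (hf : ∀ m, (f m).IsHomogeneous n)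
    (P : MvPolynomial σ R) : (liftPoly f P).IsHomogeneous n := by
  rw [liftPoly_apply]
  exact IsHomogeneous.sum _ _ _ fun m _ => by
    simpa [smul_eq_C_mul] using (hf m).C_mul (P.coeff m)

theorem coeff_liftPoly_nonneg [PartialOrder R] [IsOrderedRing R] {P : MvPolynomial σ R}
    (hP : ∀ m, 0 ≤ P.coeff m) (hf : ∀ m e, 0 ≤ (f m).coeff e) (e : τ →₀ ℕ) :
    0 ≤ (liftPoly f P).coeff e := by
  rw [liftPoly_apply, coeff_sum]
  exact Finset.sum_nonneg fun m _ => by rw [coeff_smul]; exact mul_nonneg (hP m) (hf m e)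

theorem eval_liftPoly {w : τ → R} {y : σ → R} {P : MvPolynomial σ R}
    (hf : ∀ m ∈ P.support, eval w (f m) = eval y (monomial m 1)) :
    eval w (liftPoly f P) = eval y P := by
  conv_rhs => rw [P.as_sum]
  rw [liftPoly_apply, map_sum, map_sum]
  refine Finset.sum_congr rfl fun m hm => ?_
  rw [smul_eq_C_mul, eval_mul, eval_C, hf m hm, ← smul_eval, smul_monomial, smul_eq_mul,
    mul_one]

end Lift

section SegreLift

variable {σ R : Type*} [CommRing R]

def segre (y : σ → R) : σ × σ → R := fun p => y p.1 * y p.2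

theorem eval_monomial_pairExp (y : σ → R) (p : σ × σ) :
    eval y (monomial (pairExp p) 1) = y p.1 * y p.2 := by
  rw [pairExp, ← one_mul (1 : R), ← monomial_mul, eval_mul]
  simp [eval_monomial]

theorem eval_segre_X_mul_X (y : σ → R) (p q : σ × σ) :
    eval (segre y) (X p * X q) = eval y (monomial (pairExp p + pairExp q) 1) := by
  rw [← one_mul (1 : R), ← monomial_mul, eval_mul, eval_mul, eval_monomial_pairExp,
    eval_monomial_pairExp]
  simp [segre]

variable [Nonempty σ]

noncomputable def pairOf (b : σ →₀ ℕ) : σ × σ := Classical.epsilon fun p => pairExp p = b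

noncomputable def splitOf (m : σ →₀ ℕ) : (σ × σ) × (σ × σ) :=
  Classical.epsilon (Splits m)

theorem pairExp_pairOf {b : σ →₀ ℕ} (hb : b.degree = 2) : pairExp (pairOf b) = b :=
  Classical.epsilon_spec (exists_pairExp_eq hb)

theorem splits_splitOf {m : σ →₀ ℕ} (hm : m.degree = 4) : Splits m (splitOf m) :=
  Classical.epsilon_spec (exists_splits hm)

variable (R) in
noncomputable def linLift : MvPolynomial σ R →ₗ[R] MvPolynomial (σ × σ) R :=
  liftPoly fun b => X (pairOf b)

variable (R) in
noncomputable def quadLift : MvPolynomial σ R →ₗ[R] MvPolynomial (σ × σ) R :=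
  liftPoly fun m => X (splitOf m).1 * X (splitOf m).2

theorem isHomogeneous_linLift (P : MvPolynomial σ R) : (linLift R P).IsHomogeneous 1 :=
  isHomogeneous_liftPoly _ (fun _ => isHomogeneous_X R _) P

theorem isHomogeneous_quadLift (P : MvPolynomial σ R) : (quadLift R P).IsHomogeneous 2 :=
  isHomogeneous_liftPoly _ (fun _ => (isHomogeneous_X R _).mul (isHomogeneous_X R _)) P

theorem eval_segre_linLift {P : MvPolynomial σ R} (hP : P.IsHomogeneous 2) (y : σ → R) :
    eval (segre y) (linLift R P) = eval y P :=
  eval_liftPoly _ fun b hb => by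
    rw [eval_X, segre, ← eval_monomial_pairExp,
      pairExp_pairOf (hP.degree_eq_of_mem_support hb)]

theorem eval_segre_quadLift {P : MvPolynomial σ R} (hP : P.IsHomogeneous 4) (y : σ → R) :
    eval (segre y) (quadLift R P) = eval y P :=
  eval_liftPoly _ fun m hm => by
    rw [eval_segre_X_mul_X, (splits_splitOf (hP.degree_eq_of_mem_support hm)).1]

theorem X_mul_linLift (r : σ × σ) (P : MvPolynomial σ R) :
    X r * linLift R P = ∑ b ∈ P.support, P.coeff b • (X r * X (pairOf b)) := by
  simp_rw [linLift, liftPoly_apply, Finset.mul_sum, mul_smul_comm]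

theorem quadLift_X_mul_X_mul (r : σ × σ) (P : MvPolynomial σ R) :
    quadLift R (X r.1 * X r.2 * P) = ∑ b ∈ P.support,
      P.coeff b • (X (splitOf (pairExp r + b)).1 * X (splitOf (pairExp r + b)).2) := by
  conv_lhs => rw [P.as_sum, Finset.mul_sum, map_sum]
  refine Finset.sum_congr rfl fun b _ => ?_
  rw [X, X, monomial_mul, monomial_mul, one_mul, one_mul, quadLift, liftPoly_monomial, pairExp]

section LiftNonneg

variable [PartialOrder R] [IsOrderedRing R] {P : MvPolynomial σ R}

theorem coeff_linLift_nonneg (hP : ∀ m, 0 ≤ P.coeff m) (e : σ × σ →₀ ℕ) :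
    0 ≤ (linLift R P).coeff e :=
  coeff_liftPoly_nonneg _ hP (fun _ => coeff_X_nonneg _) e

theorem coeff_quadLift_nonneg (hP : ∀ m, 0 ≤ P.coeff m) (e : σ × σ →₀ ℕ) :
    0 ≤ (quadLift R P).coeff e :=
  coeff_liftPoly_nonneg _ hP
    (fun _ => coeff_mul_nonneg (coeff_X_nonneg _) (coeff_X_nonneg _)) e

end LiftNonneg

theorem coeff_quadLift_single_two {P : MvPolynomial σ R} (hP : P.IsHomogeneous 4) {v : σ × σ}
    (hv : v.1 = v.2 → P.coeff (Finsupp.single v.1 4) = 0) :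
    (quadLift R P).coeff (Finsupp.single v 2) = 0 := by
  rw [quadLift, liftPoly_apply, coeff_sum]
  refine Finset.sum_eq_zero fun m hm => ?_
  obtain ⟨hpq, hdiag⟩ := splits_splitOf (hP.degree_eq_of_mem_support hm)
  rw [coeff_smul]
  by_cases h : (splitOf m).1 = v ∧ (splitOf m).2 = v
  · have hvv := hdiag (h.1.trans h.2.symm)
    rw [h.1] at hvv
    have : m = Finsupp.single v.1 4 := by
      rw [← hpq, h.1, h.2, pairExp, ← hvv, ← Finsupp.single_add, ← Finsupp.single_add]
      rfl
    rw [this, hv hvv, zero_smul]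
  · rw [coeff_X_mul_X_single_two h, smul_zero]

end SegreLift

section Exchange

variable {ι R : Type*} [CommRing R]

theorem isPPComponent_X_mul_X_sub [PartialOrder R] [IsOrderedRing R] {r s v o : ι}
    (h : ¬(r = v ∧ s = v)) : IsPPComponent v (X r * X s - X v * X o : MvPolynomial ι R) :=
  ⟨X r * X s, X o, coeff_mul_nonneg (coeff_X_nonneg r) (coeff_X_nonneg s), coeff_X_nonneg o,
    (isHomogeneous_X R r).mul (isHomogeneous_X R s), isHomogeneous_X R o,
    coeff_X_mul_X_single_two h, rfl⟩

variable [DecidableEq ι]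

/-- The exchange `X r * X s - X p * X q` is booked to the component `p`, or to `q` when
`X r * X s = X p ^ 2`, so that its positive part is never the square of the variable of the
component it is booked to. -/
def exchangeSite (r s p q : ι) : ι := if r = p ∧ s = p then q else p

variable (R) in
noncomputable def exchange (r s p q v : ι) : MvPolynomial ι R :=
  if v = exchangeSite r s p q then X r * X s - X p * X q else 0

theorem sum_exchange [Fintype ι] (r s p q : ι) :
    ∑ v, exchange R r s p q v = X r * X s - X p * X q := by
  simp [exchange]

theorem isPPComponent_exchange [PartialOrder R] [IsOrderedRing R] (r s p q v : ι) :
    IsPPComponent v (exchange R r s p q v) := by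
  rw [exchange]
  split_ifs with hv
  · rw [exchangeSite] at hv
    by_cases hrs : r = p ∧ s = p
    · rw [if_pos hrs] at hv
      subst hv
      by_cases hqp : v = p
      · rw [hrs.1, hrs.2, hqp, sub_self]
        exact IsPPComponent.zero
      · rw [mul_comm (X p)]
        exact isPPComponent_X_mul_X_sub fun h => hqp (hrs.1 ▸ h.1).symm
    · rw [if_neg hrs] at hv
      subst hv
      exact isPPComponent_X_mul_X_sub hrs
  · exact IsPPComponent.zero

theorem eval_segre_exchange {σ : Type*} [DecidableEq σ] {r s p q : σ × σ}
    (h : pairExp r + pairExp s = pairExp p + pairExp q) (y : σ → R) (v : σ × σ) :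
    eval (segre y) (exchange R r s p q v) = 0 := by
  rw [exchange]
  split_ifs
  · rw [map_sub, eval_segre_X_mul_X, eval_segre_X_mul_X, h, sub_self]
  · exact map_zero _

end Exchange

section LiftedSystem

variable {σ R : Type*} [CommRing R] [Fintype σ] [DecidableEq σ] [Nonempty σ]
  {G L : σ × σ → MvPolynomial σ R}

noncomputable def liftedSystem (G L : σ × σ → MvPolynomial σ R) (v : σ × σ) :
    MvPolynomial (σ × σ) R :=
  quadLift R (G v) - X v * linLift R (L v) +
    ∑ r, ∑ b ∈ (L r).support, (L r).coeff b •
      exchange R r (pairOf b) (splitOf (pairExp r + b)).1 (splitOf (pairExp r + b)).2 v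

theorem isPPComponent_liftedSystem [PartialOrder R] [IsOrderedRing R]
    (hG : ∀ v m, 0 ≤ (G v).coeff m) (hG4 : ∀ v, (G v).IsHomogeneous 4)
    (hGdiag : ∀ i, (G (i, i)).coeff (Finsupp.single i 4) = 0) (hL : ∀ v m, 0 ≤ (L v).coeff m)
    (v : σ × σ) : IsPPComponent v (liftedSystem G L v) := by
  have hmain : IsPPComponent v (quadLift R (G v) - X v * linLift R (L v)) := by
    refine ⟨_, _, coeff_quadLift_nonneg (hG v), coeff_linLift_nonneg (hL v),
      isHomogeneous_quadLift _, isHomogeneous_linLift _,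
      coeff_quadLift_single_two (hG4 v) fun hv => ?_, rfl⟩
    obtain ⟨i, j⟩ := v
    obtain rfl : i = j := hv
    exact hGdiag i
  exact hmain.add <| IsPPComponent.sum fun r _ => IsPPComponent.sum fun b _ =>
    (isPPComponent_exchange _ _ _ _ v).smul (hL r b)

theorem sum_liftedSystem (hsum : ∑ v, (G v - X v.1 * X v.2 * L v) = 0) :
    ∑ v, liftedSystem G L v = 0 := by
  calc ∑ v, liftedSystem G L v
      = ∑ v, (quadLift R (G v) - X v * linLift R (L v)) +
          ∑ r, ∑ b ∈ (L r).support, (L r).coeff b •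
            (X r * X (pairOf b) -
              X (splitOf (pairExp r + b)).1 * X (splitOf (pairExp r + b)).2) := by
        simp only [liftedSystem, Finset.sum_add_distrib]
        congr 1
        rw [Finset.sum_comm]
        refine Finset.sum_congr rfl fun r _ => ?_
        rw [Finset.sum_comm]
        refine Finset.sum_congr rfl fun b _ => ?_
        rw [← Finset.smul_sum, sum_exchange]
    _ = quadLift R (∑ v, (G v - X v.1 * X v.2 * L v)) := by
        simp only [smul_sub, Finset.sum_sub_distrib, ← X_mul_linLift, ← quadLift_X_mul_X_mul,
          map_sum, map_sub]
        abel
    _ = 0 := by rw [hsum, map_zero]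

theorem eval_segre_liftedSystem (hG4 : ∀ v, (G v).IsHomogeneous 4)
    (hL2 : ∀ v, (L v).IsHomogeneous 2) (y : σ → R) (v : σ × σ) :
    eval (segre y) (liftedSystem G L v) = eval y (G v - X v.1 * X v.2 * L v) := by
  have hexchange : ∀ r, ∀ b ∈ (L r).support, eval (segre y)
      (exchange R r (pairOf b) (splitOf (pairExp r + b)).1 (splitOf (pairExp r + b)).2 v) = 0 :=
    fun r b hb => by
      have hb2 := (hL2 r).degree_eq_of_mem_support hb
      refine eval_segre_exchange ?_ y v
      rw [pairExp_pairOf hb2, (splits_splitOf (by rw [map_add, degree_pairExp, hb2])).1]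
  simp only [liftedSystem, map_add, map_sub, map_mul, map_sum, smul_eval,
    eval_segre_quadLift (hG4 v), eval_segre_linLift (hL2 v), eval_X]
  rw [Finset.sum_eq_zero fun r _ => Finset.sum_eq_zero fun b hb => by
    rw [hexchange r b hb, mul_zero], add_zero, segre]

end LiftedSystem

section SelfProductSystem

variable {σ R : Type*} [CommRing R] [PartialOrder R] [IsOrderedRing R]
  [Fintype σ] [DecidableEq σ] [Nonempty σ]

theorem exists_selfProduct_system {A B C : σ → MvPolynomial σ R}
    (hA : ∀ k m, 0 ≤ (A k).coeff m) (hB : ∀ k m, 0 ≤ (B k).coeff m)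
    (hA3 : ∀ k, (A k).IsHomogeneous 3) (hB2 : ∀ k, (B k).IsHomogeneous 2)
    (hAdiag : ∀ k, (A k).coeff (Finsupp.single k 3) = 0)
    (hCAB : ∀ k, C k = A k - X k * B k) (hCsum : ∑ k, C k = 0) :
    ∃ D : σ × σ → MvPolynomial (σ × σ) R,
      (∀ v, IsPPComponent v (D v)) ∧ ∑ v, D v = 0 ∧
      ∀ y v, eval (segre y) (D v) = eval y (C v.1) * y v.2 + y v.1 * eval y (C v.2) := by
  set G := fun v : σ × σ => A v.1 * X v.2 + X v.1 * A v.2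
  set L := fun v : σ × σ => B v.1 + B v.2
  have hGL : ∀ v, G v - X v.1 * X v.2 * L v = C v.1 * X v.2 + X v.1 * C v.2 := fun v => by
    simp only [G, L, hCAB]
    ring
  have hG4 : ∀ v, (G v).IsHomogeneous 4 := fun v =>
    ((hA3 v.1).mul (isHomogeneous_X R v.2)).add ((isHomogeneous_X R v.1).mul (hA3 v.2))
  have hL2 : ∀ v, (L v).IsHomogeneous 2 := fun v => (hB2 v.1).add (hB2 v.2)
  have hGdiag : ∀ i, (G (i, i)).coeff (Finsupp.single i 4) = 0 := fun i => by
    have h4 : Finsupp.single i 4 = Finsupp.single i 3 + Finsupp.single i 1 := by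
      rw [← Finsupp.single_add]
    simp only [G]
    rw [mul_comm (X i), coeff_add, h4, coeff_mul_X, hAdiag, add_zero]
  refine ⟨liftedSystem G L, isPPComponent_liftedSystem (fun v m => ?_) hG4 hGdiag (fun v m => ?_),
    sum_liftedSystem ?_, fun y v => ?_⟩
  · rw [coeff_add]
    exact add_nonneg (coeff_mul_nonneg (hA _) (coeff_X_nonneg _) m)
      (coeff_mul_nonneg (coeff_X_nonneg _) (hA _) m)
  · rw [coeff_add]
    exact add_nonneg (hB _ m) (hB _ m)
  · simp only [hGL, Fintype.sum_prod_type, Finset.sum_add_distrib, ← Finset.mul_sum,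
      ← Finset.sum_mul, hCsum, zero_mul, mul_zero, Finset.sum_const_zero, add_zero]
  · rw [eval_segre_liftedSystem hG4 hL2, hGL]
    simp

end SelfProductSystem

end SelfProduct

open SelfProduct

theorem stmt_10_general (N : ℕ)
    (C : Fin N → MvPolynomial (Fin N) ℝ)
    (hC : ∀ k : Fin N, ∃ A B : MvPolynomial (Fin N) ℝ,
      (∀ d, 0 ≤ A.coeff d) ∧ (∀ d, 0 ≤ B.coeff d) ∧
      A.IsHomogeneous 3 ∧ B.IsHomogeneous 2 ∧
      A.coeff (Finsupp.single k 3) = 0 ∧ C k = A - X k * B)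
    (hCsum : (∑ k : Fin N, C k) = 0)
    (y : ℝ → (Fin N → ℝ))
    (hode : ∀ t : ℝ, 0 ≤ t → ∀ k : Fin N,
      HasDerivAt (fun t => y t k) (eval (y t) (C k)) t)
    (hpos : ∀ t : ℝ, 0 ≤ t → ∀ k : Fin N, 0 ≤ y t k)
    (hsum : ∀ t : ℝ, 0 ≤ t → (∑ k : Fin N, y t k) = 1)
    (k₀ : Fin N) (hy0 : ∀ k : Fin N, y 0 k = if k = k₀ then 1 else 0)
    (d : Fin N) (α : ℝ)
    (hlim : Tendsto (fun t => y t d) atTop (nhds α)) :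
    ∃ D : Fin N × Fin N → MvPolynomial (Fin N × Fin N) ℝ,
      (∀ ij : Fin N × Fin N, ∃ P Q : MvPolynomial (Fin N × Fin N) ℝ,
        (∀ e, 0 ≤ P.coeff e) ∧ (∀ e, 0 ≤ Q.coeff e) ∧
        P.IsHomogeneous 2 ∧ Q.IsHomogeneous 1 ∧
        P.coeff (Finsupp.single ij 2) = 0 ∧
        D ij = P - X ij * Q) ∧
      (∀ ij : Fin N × Fin N, (D ij).IsHomogeneous 2) ∧
      (∑ ij : Fin N × Fin N, D ij) = 0 ∧
      (∀ t : ℝ, 0 ≤ t → ∀ ij : Fin N × Fin N,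
        HasDerivAt (fun t => y t ij.1 * y t ij.2)
          (eval (fun kl : Fin N × Fin N => y t kl.1 * y t kl.2) (D ij)) t) ∧
      (∀ ij : Fin N × Fin N, y 0 ij.1 * y 0 ij.2 = if ij = (k₀, k₀) then 1 else 0) ∧
      (∀ t : ℝ, 0 ≤ t → ∀ ij : Fin N × Fin N, 0 ≤ y t ij.1 * y t ij.2) ∧
      (∀ t : ℝ, 0 ≤ t → (∑ ij : Fin N × Fin N, y t ij.1 * y t ij.2) = 1) ∧
      Tendsto (fun t => ∑ j : Fin N, y t d * y t j) atTop (nhds α) := by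
  have : Nonempty (Fin N) := ⟨k₀⟩
  choose A B hA hB hA3 hB2 hAdiag hCAB using hC
  obtain ⟨D, hPP, hDsum, hDeval⟩ := exists_selfProduct_system hA hB hA3 hB2 hAdiag hCAB hCsum
  have hrow : ∀ t, 0 ≤ t → ∀ i, ∑ j, y t i * y t j = y t i := fun t ht i => by
    rw [← Finset.mul_sum, hsum t ht, mul_one]
  refine ⟨D, hPP, fun v => (hPP v).isHomogeneous, hDsum, fun t ht v => ?_, fun v => ?_,
    fun t ht v => mul_nonneg (hpos t ht v.1) (hpos t ht v.2), fun t ht => ?_,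
    hlim.congr' (eventually_ge_atTop 0 |>.mono fun t ht => (hrow t ht d).symm)⟩
  · have h := (hode t ht v.1).mul (hode t ht v.2)
    rwa [← hDeval] at h
  · simp only [hy0, Prod.ext_iff]
    split_ifs <;> simp_all
  · rw [Fintype.sum_prod_type]
    simp only [hrow t ht, hsum t ht]

/-- Stage 3: a number computed by a TPP-implementable cubic form system on the
probability simplex is computed (as the sum over the marked set
`{(d, j) : j}`) by the self-product PP-implementable quadratic form system
with variables `z_{(i,j)} = y_i · y_j`. -/
theorem stmt_10 (N : ℕ) (hN : 1 ≤ N)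
    (C : Fin N → MvPolynomial (Fin N) ℝ)
    (hC : ∀ k : Fin N, ∃ A B : MvPolynomial (Fin N) ℝ,
      (∀ d, 0 ≤ A.coeff d) ∧ (∀ d, 0 ≤ B.coeff d) ∧
      A.IsHomogeneous 3 ∧ B.IsHomogeneous 2 ∧
      A.coeff (Finsupp.single k 3) = 0 ∧ C k = A - X k * B)
    (hChom : ∀ k : Fin N, (C k).IsHomogeneous 3)
    (hCsum : (∑ k : Fin N, C k) = 0)
    (y : ℝ → (Fin N → ℝ))
    (hode : ∀ t : ℝ, 0 ≤ t → ∀ k : Fin N,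
      HasDerivAt (fun t => y t k) (eval (y t) (C k)) t)
    (hpos : ∀ t : ℝ, 0 ≤ t → ∀ k : Fin N, 0 ≤ y t k)
    (hsum : ∀ t : ℝ, 0 ≤ t → (∑ k : Fin N, y t k) = 1)
    (k₀ : Fin N) (hy0 : ∀ k : Fin N, y 0 k = if k = k₀ then 1 else 0)
    (d : Fin N) (α : ℝ)
    (hlim : Tendsto (fun t => y t d) atTop (nhds α)) :
    ∃ D : Fin N × Fin N → MvPolynomial (Fin N × Fin N) ℝ,
      (∀ ij : Fin N × Fin N, ∃ P Q : MvPolynomial (Fin N × Fin N) ℝ,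
        (∀ e, 0 ≤ P.coeff e) ∧ (∀ e, 0 ≤ Q.coeff e) ∧
        P.IsHomogeneous 2 ∧ Q.IsHomogeneous 1 ∧
        P.coeff (Finsupp.single ij 2) = 0 ∧
        D ij = P - X ij * Q) ∧
      (∀ ij : Fin N × Fin N, (D ij).IsHomogeneous 2) ∧
      (∑ ij : Fin N × Fin N, D ij) = 0 ∧
      (∀ t : ℝ, 0 ≤ t → ∀ ij : Fin N × Fin N,
        HasDerivAt (fun t => y t ij.1 * y t ij.2)
          (eval (fun kl : Fin N × Fin N => y t kl.1 * y t kl.2) (D ij)) t) ∧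
      (∀ ij : Fin N × Fin N, y 0 ij.1 * y 0 ij.2 = if ij = (k₀, k₀) then 1 else 0) ∧
      (∀ t : ℝ, 0 ≤ t → ∀ ij : Fin N × Fin N, 0 ≤ y t ij.1 * y t ij.2) ∧
      (∀ t : ℝ, 0 ≤ t → (∑ ij : Fin N × Fin N, y t ij.1 * y t ij.2) = 1) ∧
      Tendsto (fun t => ∑ j : Fin N, y t d * y t j) atTop (nhds α) :=
  stmt_10_general N C hC hCsum y hode hpos hsum k₀ hy0 d α hlim
end

section
/- Let n ≥ 1 and let P : Fin n → MvPolynomial (Fin n) ℚ be such that: each P_r is a homogeneous polynomial of degree 2 of the form p_r − X_r·q_r where p_r is a homogeneous degree-2 polynomial with nonnegative coefficients whose coefficient of X_r² is zero and q_r is a homogeneous degree-1 polynomial with nonnegative coefficients; and ∑_r P_r = 0. Then there exist a rational ε > 0 and nonnegative rationals α(i,j,k,l) for (i,j,k,l) ∈ (Fin n)⁴ with ∑_{(k,l)} α(i,j,k,l) = 1 for every pair (i,j), such that for every x ∈ ℝ^n with ∑_i x_i = 1 and every r, one has ε·P_r(x) = ∑_{(i,j)} x_i·x_j·( −[i = r]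 − [j = r] + ∑_{(k,l)} α(i,j,k,l)·([k = r] + [l = r]) ), where [P] denotes 1 if P holds and 0 otherwise. -/
open MvPolynomial Finsupp

lemma my_degree_add {σ : Type*} (a b : σ →₀ ℕ) : (a + b).degree = a.degree + b.degree := by
  simp only [Finsupp.degree_eq_weight_one, map_add]

lemma my_degree_single {σ : Type*} (i : σ) (k : ℕ) : (Finsupp.single i k).degree = k := by
  simp [Finsupp.degree_eq_weight_one, Finsupp.weight_apply, Finsupp.sum_single_index]

lemma deg_one {σ : Type*} (d : σ →₀ ℕ) (hd : d.degree = 1) : ∃ i, d = Finsupp.single i 1 := by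
  have hne : d ≠ 0 := by
    intro h; rw [h] at hd; simp at hd
  obtain ⟨i, hi⟩ := Finsupp.support_nonempty_iff.mpr hne
  have h1 : 1 ≤ d i := Nat.one_le_iff_ne_zero.mpr (Finsupp.mem_support_iff.mp hi)
  have hle : Finsupp.single i 1 ≤ d := Finsupp.single_le_iff.mpr h1
  have hdec : d = (d - Finsupp.single i 1) + Finsupp.single i 1 := (tsub_add_cancel_of_le hle).symm
  have hdeg : (d - Finsupp.single i 1).degree = 0 := by
    have := my_degree_add (d - Finsupp.single i 1) (Finsupp.single i 1)
    rw [← hdec, hd, my_degree_single] at this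
    omega
  rw [Finsupp.degree_eq_zero_iff] at hdeg
  exact ⟨i, by rw [hdec, hdeg, zero_add]⟩

lemma deg_two {σ : Type*} (d : σ →₀ ℕ) (hd : d.degree = 2) :
    ∃ i j, d = Finsupp.single i 1 + Finsupp.single j 1 := by
  have hne : d ≠ 0 := by
    intro h; rw [h] at hd; simp at hd
  obtain ⟨i, hi⟩ := Finsupp.support_nonempty_iff.mpr hne
  have h1 : 1 ≤ d i := Nat.one_le_iff_ne_zero.mpr (Finsupp.mem_support_iff.mp hi)
  have hle : Finsupp.single i 1 ≤ d := Finsupp.single_le_iff.mpr h1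
  have hdec : d = (d - Finsupp.single i 1) + Finsupp.single i 1 := (tsub_add_cancel_of_le hle).symm
  have hdeg : (d - Finsupp.single i 1).degree = 1 := by
    have := my_degree_add (d - Finsupp.single i 1) (Finsupp.single i 1)
    rw [← hdec, hd, my_degree_single] at this
    omega
  obtain ⟨j, hj⟩ := deg_one _ hdeg
  exact ⟨j, i, by rw [hdec, hj]⟩

lemma pair_eq {σ : Type*} [DecidableEq σ] {i j k l : σ} :
    Finsupp.single i 1 + Finsupp.single j 1 = Finsupp.single k 1 + Finsupp.single l 1 ↔
      (i = k ∧ j = l) ∨ (i = l ∧ j = k) := by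
  constructor
  · intro h
    by_cases hik : i = k
    · subst hik
      have := add_left_cancel h
      exact Or.inl ⟨rfl, (Finsupp.single_left_inj one_ne_zero).mp this⟩
    · have hi := DFunLike.congr_fun h i
      simp only [Finsupp.add_apply, Finsupp.single_apply, if_pos rfl] at hi
      have hli : l = i := by
        by_contra hli
        simp [Ne.symm hik, hli] at hi
      subst hli
      have h' : Finsupp.single j 1 + Finsupp.single l 1 =
          Finsupp.single k 1 + Finsupp.single l 1 := by
        rw [add_comm, h]
      have hjk := (Finsupp.single_left_inj (one_ne_zero)).mp (add_right_cancel h')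
      exact Or.inr ⟨rfl, hjk⟩
  · rintro (⟨rfl, rfl⟩ | ⟨rfl, rfl⟩)
    · rfl
    · exact add_comm _ _

lemma quad_decomp {n : ℕ} (p : MvPolynomial (Fin n) ℚ) (hp : p.IsHomogeneous 2) :
    p = ∑ i : Fin n, ∑ j : Fin n, MvPolynomial.C
      ((if i = j then 1 else 2⁻¹) * p.coeff (Finsupp.single i 1 + Finsupp.single j 1)) *
      X i * X j := by
  have hmon : ∀ (c : ℚ) (i j : Fin n), (MvPolynomial.C c * X i * X j : MvPolynomial (Fin n) ℚ)
      = monomial (Finsupp.single i 1 + Finsupp.single j 1) c := by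
    intro c i j
    rw [MvPolynomial.C_apply, MvPolynomial.X, MvPolynomial.X, monomial_mul, monomial_mul]
    simp
  apply MvPolynomial.ext
  intro d
  simp only [hmon, MvPolynomial.coeff_sum, MvPolynomial.coeff_monomial]
  by_cases hd : d.degree = 2
  · obtain ⟨i0, j0, rfl⟩ := deg_two d hd
    simp only [pair_eq]
    by_cases hij : i0 = j0
    · subst hij
      simp only [or_self, ite_and]
      simp [Finset.sum_ite_eq']
    · have split : ∀ i j : Fin n,
          (if (i = i0 ∧ j = j0) ∨ (i = j0 ∧ j = i0) then
            (if i = j then (1:ℚ) else 2⁻¹) * p.coeff (Finsupp.single i 1 + Finsupp.single j 1)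
          else 0)
          = (if i = i0 ∧ j = j0 then
              (if i = j then (1:ℚ) else 2⁻¹) * p.coeff (Finsupp.single i 1 + Finsupp.single j 1)
            else 0)
          + (if i = j0 ∧ j = i0 then
              (if i = j then (1:ℚ) else 2⁻¹) * p.coeff (Finsupp.single i 1 + Finsupp.single j 1)
            else 0) := by
        intro i j
        by_cases h1 : i = i0 ∧ j = j0
        · have h2 : ¬(i = j0 ∧ j = i0) := fun h => hij (h1.1.symm.trans h.1)
          obtain ⟨rfl, rfl⟩ := h1
          simp [h2, hij]
        · by_cases h2 : i = j0 ∧ j = i0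
          · obtain ⟨rfl, rfl⟩ := h2
            simp [h1, Ne.symm hij]
          · simp [h1, h2]
      simp only [split, Finset.sum_add_distrib, ite_and]
      simp only [Finset.sum_ite_irrel, Finset.sum_const_zero, Finset.sum_ite_eq', Finset.mem_univ, if_true]
      rw [if_neg hij, if_neg (Ne.symm hij), add_comm (Finsupp.single j0 1) (Finsupp.single i0 1)]
      ring
  · rw [hp.coeff_eq_zero hd]
    refine (Finset.sum_eq_zero fun i _ => Finset.sum_eq_zero fun j _ => ?_).symm
    rw [if_neg]
    intro h
    apply hd
    rw [← h, my_degree_add, my_degree_single, my_degree_single]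

/-- Stage 4 (Theorem 6): every PP-implementable quadratic form system over ℚ,
after a constant time dilation by a small rational `ε`, is realized as the
balance equation of a probabilistic large-population protocol on the simplex
`∑ x_i = 1`. -/
theorem stmt_11 (n : ℕ) (hn : 1 ≤ n)
    (P : Fin n → MvPolynomial (Fin n) ℚ)
    (hP : ∀ r : Fin n, ∃ p q : MvPolynomial (Fin n) ℚ,
      (∀ d, 0 ≤ p.coeff d) ∧ (∀ d, 0 ≤ q.coeff d) ∧
      p.IsHomogeneous 2 ∧ q.IsHomogeneous 1 ∧
      p.coeff (Finsupp.single r 2) = 0 ∧ P r = p - X r * q)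
    (hPhom : ∀ r : Fin n, (P r).IsHomogeneous 2)
    (hPsum : (∑ r : Fin n, P r) = 0) :
    ∃ ε : ℚ, 0 < ε ∧
      ∃ α : Fin n → Fin n → Fin n → Fin n → ℚ,
        (∀ i j k l : Fin n, 0 ≤ α i j k l) ∧
        (∀ i j : Fin n, ∑ k : Fin n, ∑ l : Fin n, α i j k l = 1) ∧
        ∀ x : Fin n → ℝ, (∑ i : Fin n, x i) = 1 →
          ∀ r : Fin n,
            (ε : ℝ) * aeval x (P r) =
              ∑ i : Fin n, ∑ j : Fin n, x i * x j *
                (-(if i = r then (1 : ℝ) else 0) - (if j = r then (1 : ℝ) else 0) +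
                  ∑ k : Fin n, ∑ l : Fin n, (α i j k l : ℝ) *
                    ((if k = r then (1 : ℝ) else 0) +
                      (if l = r then (1 : ℝ) else 0))) := by
  classical
  set a : Fin n → Fin n → Fin n → ℚ := fun r i j =>
    (if i = j then 1 else 2⁻¹) * (P r).coeff (Finsupp.single i 1 + Finsupp.single j 1) with ha
  have hdec : ∀ r, P r = ∑ i : Fin n, ∑ j : Fin n, C (a r i j) * X i * X j :=
    fun r => quad_decomp (P r) (hPhom r)
  have heval : ∀ (x : Fin n → ℝ) (r : Fin n),
      (aeval x (P r) : ℝ) = ∑ i : Fin n, ∑ j : Fin n, (a r i j : ℝ) * (x i * x j) := by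
    intro x r
    conv_lhs => rw [hdec r]
    simp [map_sum, eq_ratCast, mul_assoc]
  have hasum : ∀ i j, ∑ r : Fin n, a r i j = 0 := by
    intro i j
    have h0 : MvPolynomial.coeff (Finsupp.single i 1 + Finsupp.single j 1)
        (∑ r : Fin n, P r) = 0 := by rw [hPsum]; simp
    rw [MvPolynomial.coeff_sum] at h0
    simp only [ha]
    rw [← Finset.mul_sum, h0, mul_zero]
  have hannn : ∀ r i j, i ≠ r → j ≠ r → 0 ≤ a r i j := by
    intro r i j hi hj
    obtain ⟨p, q, hpnn, hqnn, hp2, hq1, hpr, hPr⟩ := hP r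
    have hXq : MvPolynomial.coeff (Finsupp.single i 1 + Finsupp.single j 1) (X r * q) = 0 := by
      rw [MvPolynomial.coeff_X_mul', if_neg]
      simp only [Finsupp.mem_support_iff, Finsupp.add_apply, Finsupp.single_apply]
      intro h
      exact h (by simp [hi, hj])
    have hco : (P r).coeff (Finsupp.single i 1 + Finsupp.single j 1)
        = p.coeff (Finsupp.single i 1 + Finsupp.single j 1) := by
      rw [hPr, MvPolynomial.coeff_sub, hXq, sub_zero]
    simp only [ha]
    rw [hco]
    apply mul_nonneg _ (hpnn _)
    split <;> norm_num
  set B : ℚ := 1 + ∑ r : Fin n, ∑ i : Fin n, ∑ j : Fin n, |a r i j| with hB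
  have hBpos : 0 < B := by
    have : (0:ℚ) ≤ ∑ r : Fin n, ∑ i : Fin n, ∑ j : Fin n, |a r i j| :=
      Finset.sum_nonneg fun _ _ => Finset.sum_nonneg fun _ _ =>
        Finset.sum_nonneg fun _ _ => abs_nonneg _
    linarith
  have habs : ∀ r i j, |a r i j| ≤ B := by
    intro r i j
    have h1 : |a r i j| ≤ ∑ j' : Fin n, |a r i j'| :=
      Finset.single_le_sum (f := fun j' => |a r i j'|)
        (fun _ _ => abs_nonneg _) (Finset.mem_univ j)
    have h2 : ∑ j' : Fin n, |a r i j'| ≤ ∑ i' : Fin n, ∑ j' : Fin n, |a r i' j'| :=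
      Finset.single_le_sum (f := fun i' => ∑ j' : Fin n, |a r i' j'|)
        (fun _ _ => Finset.sum_nonneg fun _ _ => abs_nonneg _) (Finset.mem_univ i)
    have h3 : ∑ i' : Fin n, ∑ j' : Fin n, |a r i' j'| ≤
        ∑ r' : Fin n, ∑ i' : Fin n, ∑ j' : Fin n, |a r' i' j'| :=
      Finset.single_le_sum (f := fun r' => ∑ i' : Fin n, ∑ j' : Fin n, |a r' i' j'|)
        (fun _ _ => Finset.sum_nonneg fun _ _ => Finset.sum_nonneg fun _ _ => abs_nonneg _)
        (Finset.mem_univ r)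
    rw [hB]; linarith
  set ε : ℚ := B⁻¹ with hε
  have hεpos : 0 < ε := inv_pos.mpr hBpos
  have hεB : ε * B = 1 := inv_mul_cancel₀ hBpos.ne'
  have hεa : ∀ r i j, ε * |a r i j| ≤ 1 := by
    intro r i j
    calc ε * |a r i j| ≤ ε * B := by
          exact mul_le_mul_of_nonneg_left (habs r i j) hεpos.le
      _ = 1 := hεB
  have hεlow : ∀ r i j, -(1:ℚ) ≤ ε * a r i j := by
    intro r i j
    have h2 := hεa r i j
    have h3 : -|a r i j| ≤ a r i j := neg_abs_le _
    nlinarith [hεpos.le]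
  set v : Fin n → Fin n → Fin n → ℚ := fun r i j =>
    (if i = r then 1 else 0) + (if j = r then 1 else 0) + ε * a r i j with hv
  have hvnn : ∀ r i j, 0 ≤ v r i j := by
    intro r i j
    simp only [hv]
    by_cases hi : i = r
    · rw [if_pos hi]
      have hj0 : (0:ℚ) ≤ if j = r then (1:ℚ) else 0 := by split <;> norm_num
      have := hεlow r i j
      linarith
    · by_cases hj : j = r
      · rw [if_neg hi, if_pos hj]
        have := hεlow r i j
        linarith
      · rw [if_neg hi, if_neg hj]
        have := mul_nonneg hεpos.le (hannn r i j hi hj)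
        linarith
  have hvsum : ∀ i j, ∑ r : Fin n, v r i j = 2 := by
    intro i j
    simp only [hv]
    rw [Finset.sum_add_distrib, Finset.sum_add_distrib, ← Finset.mul_sum, hasum i j,
      mul_zero, add_zero, Finset.sum_ite_eq, Finset.sum_ite_eq]
    norm_num
  refine ⟨ε, hεpos, fun i j k l => v k i j / 2 * (v l i j / 2), ?_, ?_, ?_⟩
  · intro i j k l
    have h1 := hvnn k i j
    have h2 := hvnn l i j
    positivity
  · intro i j
    have h : ∑ k : Fin n, ∑ l : Fin n, v k i j / 2 * (v l i j / 2)
        = (∑ k : Fin n, v k i j / 2) * (∑ l : Fin n, v l i j / 2) :=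
      (Finset.sum_mul_sum _ _ _ _).symm
    rw [h, ← Finset.sum_div, hvsum i j]
    norm_num
  · intro x hx r
    have e0 : ∀ i j : Fin n, ∑ l : Fin n, v l i j / 2 = 1 := by
      intro i j
      rw [← Finset.sum_div, hvsum i j]
      norm_num
    have hbr : ∀ i j : Fin n,
        (-(if i = r then (1:ℚ) else 0) - (if j = r then (1:ℚ) else 0) +
          ∑ k : Fin n, ∑ l : Fin n, (v k i j / 2 * (v l i j / 2)) *
            ((if k = r then (1:ℚ) else 0) + (if l = r then (1:ℚ) else 0)))
        = ε * a r i j := by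
      intro i j
      have e1 : ∑ k : Fin n, ∑ l : Fin n, (v k i j / 2 * (v l i j / 2)) *
          (if k = r then (1:ℚ) else 0) = v r i j / 2 := by
        have hin : ∀ k : Fin n, ∑ l : Fin n, (v k i j / 2 * (v l i j / 2)) *
            (if k = r then (1:ℚ) else 0)
            = (if k = r then v k i j / 2 else 0) := by
          intro k
          calc ∑ l : Fin n, (v k i j / 2 * (v l i j / 2)) * (if k = r then (1:ℚ) else 0)
              = (v k i j / 2 * (if k = r then (1:ℚ) else 0)) * ∑ l : Fin n, v l i j / 2 := by
                rw [Finset.mul_sum]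
                exact Finset.sum_congr rfl fun l _ => by ring
            _ = (if k = r then v k i j / 2 else 0) := by
                rw [e0 i j, mul_one, mul_ite, mul_one, mul_zero]
        simp only [hin]
        simp [Finset.sum_ite_eq']
      have e2 : ∑ k : Fin n, ∑ l : Fin n, (v k i j / 2 * (v l i j / 2)) *
          (if l = r then (1:ℚ) else 0) = v r i j / 2 := by
        have hin : ∀ k : Fin n, ∑ l : Fin n, (v k i j / 2 * (v l i j / 2)) *
            (if l = r then (1:ℚ) else 0)
            = (v k i j / 2) * (v r i j / 2) := by
          intro k
          calc ∑ l : Fin n, (v k i j / 2 * (v l i j / 2)) * (if l = r then (1:ℚ) else 0)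
              = (v k i j / 2) * ∑ l : Fin n, (if l = r then v l i j / 2 else 0) := by
                rw [Finset.mul_sum]
                exact Finset.sum_congr rfl fun l _ => by
                  split <;> ring
            _ = (v k i j / 2) * (v r i j / 2) := by
                simp [Finset.sum_ite_eq']
        simp only [hin]
        rw [← Finset.sum_mul, e0 i j, one_mul]
      have expand : ∑ k : Fin n, ∑ l : Fin n, (v k i j / 2 * (v l i j / 2)) *
          ((if k = r then (1:ℚ) else 0) + (if l = r then (1:ℚ) else 0))
          = v r i j / 2 + v r i j / 2 := by
        have hsplit : ∀ k l : Fin n, (v k i j / 2 * (v l i j / 2)) *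
            ((if k = r then (1:ℚ) else 0) + (if l = r then (1:ℚ) else 0))
            = (v k i j / 2 * (v l i j / 2)) * (if k = r then (1:ℚ) else 0)
              + (v k i j / 2 * (v l i j / 2)) * (if l = r then (1:ℚ) else 0) :=
          fun k l => by ring
        simp only [hsplit, Finset.sum_add_distrib, e1, e2]
      rw [expand]
      simp only [hv]
      ring
    have hcast : ∀ i j : Fin n,
        (-(if i = r then (1:ℝ) else 0) - (if j = r then (1:ℝ) else 0) +
          ∑ k : Fin n, ∑ l : Fin n, ((v k i j / 2 * (v l i j / 2) : ℚ) : ℝ) *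
            ((if k = r then (1:ℝ) else 0) + (if l = r then (1:ℝ) else 0)))
        = ((ε * a r i j : ℚ) : ℝ) := by
      intro i j
      rw [← hbr i j]
      push_cast [apply_ite (fun q : ℚ => (q : ℝ))]
      ring
    rw [heval x r, Finset.mul_sum]
    refine Finset.sum_congr rfl fun i _ => ?_
    rw [Finset.mul_sum]
    refine Finset.sum_congr rfl fun j _ => ?_
    rw [hcast i j]
    push_cast
    ring
end

section
/- Let G, R, E, V : [0, ∞) → ℝ be differentiable functions satisfying G′(t) = R(t)·(1 − V(t)), R′(t) = E(t) − R(t), E′(t) = −E(t), and V′(t) = −2·E(t)²·(1 − V(t))² for all t ≥ 0, with initial values G(0) = 0, R(0) = 0, E(0) = 1, V(0) = 1/2. Then G(t) converges, as t → ∞, to (1/2)·∫₀^∞ s / cosh(s) ds. -/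
/-!
The system is triangular and integrates in closed form: `E = e^{-t}`, `R = t e^{-t}`, and
`W = 1 - V` solves the Bernoulli equation `W' = 2 E² W²`, so `1 / W = 1 + e^{-2t}`. Hence
`G' = t e^{-t} / (1 + e^{-2t}) = t / (2 cosh t)`, which is integrable on `(0, ∞)`, and `G(t)`
tends to `G(0)` plus the improper integral of `G'`.
-/

open Filter Real Set MeasureTheory

theorem eq_apply_of_hasDerivAt_zero_of_le {f : ℝ → ℝ} {a : ℝ}
    (hf : ∀ t, a ≤ t → HasDerivAt f 0 t) {t : ℝ} (ht : a ≤ t) : f t = f a :=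
  constant_of_has_deriv_right_zero (fun x hx => (hf x hx.1).continuousAt.continuousWithinAt)
    (fun x hx => (hf x hx.1).hasDerivWithinAt) t ⟨ht, le_rfl⟩

theorem tendsto_add_integral_Ioi_of_hasDerivAt {E : Type*} [NormedAddCommGroup E]
    [NormedSpace ℝ E] [CompleteSpace E] {f f' : ℝ → E} {a : ℝ}
    (hderiv : ∀ x ∈ Ici a, HasDerivAt f (f' x) x) (hint : IntegrableOn f' (Ioi a)) :
    Tendsto f atTop (nhds (f a + ∫ x in Ioi a, f' x)) := by
  have hlim := tendsto_limUnder_of_hasDerivAt_of_integrableOn_Ioi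
    (fun x hx => hderiv x (mem_Ici_of_Ioi hx)) hint
  rwa [integral_Ioi_of_hasDerivAt_of_tendsto' hderiv hint hlim, add_sub_cancel]

theorem eq_exp_neg_of_hasDerivAt {E : ℝ → ℝ} (hE : ∀ t, 0 ≤ t → HasDerivAt E (-E t) t)
    (hE0 : E 0 = 1) {t : ℝ} (ht : 0 ≤ t) : E t = exp (-t) := by
  have hconst := eq_apply_of_hasDerivAt_zero_of_le (f := fun s => E s * exp s)
    (fun s hs => ((hE s hs).mul (hasDerivAt_exp s)).congr_deriv (by ring)) ht
  simp only [hE0, exp_zero, one_mul] at hconst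
  rw [exp_neg]
  exact eq_inv_of_mul_eq_one_left hconst

theorem eq_mul_exp_neg_of_hasDerivAt {R : ℝ → ℝ}
    (hR : ∀ t, 0 ≤ t → HasDerivAt R (exp (-t) - R t) t) (hR0 : R 0 = 0) {t : ℝ} (ht : 0 ≤ t) :
    R t = t * exp (-t) := by
  have hconst := eq_apply_of_hasDerivAt_zero_of_le (f := fun s => R s * exp s - s)
    (fun s hs => (((hR s hs).mul (hasDerivAt_exp s)).sub (hasDerivAt_id s)).congr_deriv (by
      rw [exp_neg]; field_simp; ring)) ht
  simp only [hR0, zero_mul, sub_zero, sub_eq_zero] at hconst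
  rw [exp_neg, eq_mul_inv_iff_mul_eq₀ (exp_pos t).ne', hconst]

theorem one_sub_eq_inv_one_add_exp_of_hasDerivAt {V : ℝ → ℝ}
    (hV : ∀ t, 0 ≤ t → HasDerivAt V (-2 * exp (-t) ^ 2 * (1 - V t) ^ 2) t) (hV0 : V 0 = 1 / 2)
    {t : ℝ} (ht : 0 ≤ t) : 1 - V t = (1 + exp (-2 * t))⁻¹ := by
  have hanti : AntitoneOn V (Ici 0) := by
    refine antitoneOn_of_hasDerivWithinAt_nonpos (convex_Ici 0)
      (fun x hx => (hV x hx).continuousAt.continuousWithinAt)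
      (fun x hx => (hV x (interior_subset hx)).hasDerivWithinAt) fun x _ => ?_
    have := mul_nonneg (sq_nonneg (exp (-x))) (sq_nonneg (1 - V x))
    linarith
  have hne : ∀ s, 0 ≤ s → 1 - V s ≠ 0 := fun s hs => by
    linarith [hanti self_mem_Ici hs hs]
  have hexp_sq : ∀ s, exp (-2 * s) = exp (-s) ^ 2 := fun s => by
    rw [← exp_nat_mul]; ring_nf
  -- `1 / (1 - V)` and `1 + e^{-2t}` both have derivative `-2 e^{-2t}`.
  have hconst := eq_apply_of_hasDerivAt_zero_of_le (f := fun s => (1 - V s)⁻¹ - exp (-2 * s))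
    (fun s hs => ((((hasDerivAt_const s 1).sub (hV s hs)).inv (hne s hs)).sub
      (((hasDerivAt_id s).const_mul (-2)).exp)).congr_deriv (by
        have := hne s hs; simp only [Pi.sub_apply, id, hexp_sq]; field_simp; ring)) ht
  have hinv : (1 - V t)⁻¹ = 1 + exp (-2 * t) := by
    norm_num [hV0] at hconst ⊢
    linarith
  rw [← hinv, inv_inv]

theorem integrableOn_div_cosh_Ioi : IntegrableOn (fun s => s / cosh s) (Ioi 0) := by
  refine ((GammaIntegral_convergent two_pos).const_mul 2).mono'
    ((continuous_id.div continuous_cosh fun s => (cosh_pos s).ne').aestronglyMeasurable.restrict)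
    ?_
  filter_upwards [ae_restrict_mem measurableSet_Ioi] with x (hx : 0 < x)
  have hcosh : exp x / 2 ≤ cosh x := by
    rw [cosh_eq]; linarith [exp_pos (-x)]
  rw [norm_of_nonneg (div_nonneg hx.le (cosh_pos x).le)]
  calc x / cosh x ≤ x / (exp x / 2) := div_le_div_of_nonneg_left hx.le (by positivity) hcosh
    _ = 2 * (exp (-x) * x ^ ((2 : ℝ) - 1)) := by
      rw [exp_neg]; norm_num; field_simp

/-- The PIVP computing Catalan's constant `(1/2)·∫₀^∞ s / cosh s ds`:
any solution of the system with the given initial values has `G(t)`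
converging to Catalan's constant. -/
theorem stmt_13 (G R E V : ℝ → ℝ)
    (hG : ∀ t : ℝ, 0 ≤ t → HasDerivAt G (R t * (1 - V t)) t)
    (hR : ∀ t : ℝ, 0 ≤ t → HasDerivAt R (E t - R t) t)
    (hE : ∀ t : ℝ, 0 ≤ t → HasDerivAt E (-(E t)) t)
    (hV : ∀ t : ℝ, 0 ≤ t → HasDerivAt V (-2 * E t ^ 2 * (1 - V t) ^ 2) t)
    (hG0 : G 0 = 0) (hR0 : R 0 = 0) (hE0 : E 0 = 1) (hV0 : V 0 = 1 / 2) :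
    Tendsto G atTop
      (nhds ((1 / 2) * ∫ s in Set.Ioi (0 : ℝ), s / Real.cosh s)) := by
  have hE' : ∀ t, 0 ≤ t → E t = exp (-t) := fun t ht => eq_exp_neg_of_hasDerivAt hE hE0 ht
  have hR' : ∀ t, 0 ≤ t → R t = t * exp (-t) := fun t ht =>
    eq_mul_exp_neg_of_hasDerivAt (fun s hs => hE' s hs ▸ hR s hs) hR0 ht
  have hV' : ∀ t, 0 ≤ t → 1 - V t = (1 + exp (-2 * t))⁻¹ := fun t ht =>
    one_sub_eq_inv_one_add_exp_of_hasDerivAt (fun s hs => hE' s hs ▸ hV s hs) hV0 ht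
  have hG' : ∀ t ∈ Ici (0 : ℝ), HasDerivAt G (1 / 2 * (t / cosh t)) t := fun t ht => by
    refine (hG t ht).congr_deriv ?_
    rw [hR' t ht, hV' t ht, cosh_eq, show -2 * t = -t + -t by ring, exp_add, exp_neg]
    field_simp
  have hlim := tendsto_add_integral_Ioi_of_hasDerivAt hG' (integrableOn_div_cosh_Ioi.const_mul _)
  rwa [hG0, zero_add, integral_const_mul] at hlim
end

section
/- Define E(t) = e^{−t}, R(t) = t·e^{−t}, V(t) = e^{−2t} / (1 + e^{−2t}), and G(t) = ∫₀ᵗ s·e^{−s} / (1 + e^{−2s}) ds for t ≥ 0. Then these functions satisfy G′(t) = R(t)·(1 − V(t)), R′(t) = E(t) − R(t), E′(t) = −E(t), and V′(t) = −2·E(t)²·(1 − V(t))² for all t ≥ 0, together with the initial values G(0) = 0, R(0) = 0, E(0) = 1, V(0) = 1/2; moreover G(t) → (1/2)·∫₀^∞ s / cosh(s) ds as t → ∞. -/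
open Filter Real MeasureTheory

noncomputable def catalanIntegrand (s : ℝ) : ℝ := s * exp (-s) / (1 + exp (-2 * s))

lemma one_add_exp_neg_two_mul_pos (s : ℝ) : 0 < 1 + exp (-2 * s) := by positivity

lemma exp_neg_two_mul (s : ℝ) : exp (-2 * s) = exp (-s) ^ 2 := by
  rw [← exp_nat_mul]; ring_nf

lemma catalanIntegrand_eq_div_cosh (s : ℝ) : catalanIntegrand s = s / cosh s / 2 := by
  have hes : exp (-s) * exp s = 1 := by rw [← exp_add]; simp
  have := (one_add_exp_neg_two_mul_pos s).ne'
  rw [catalanIntegrand, cosh_eq, exp_neg_two_mul] at *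
  field_simp
  linear_combination s * hes

lemma catalanIntegrand_eq_mul_one_sub (s : ℝ) :
    catalanIntegrand s = s * exp (-s) * (1 - exp (-2 * s) / (1 + exp (-2 * s))) := by
  have := (one_add_exp_neg_two_mul_pos s).ne'
  rw [catalanIntegrand]
  field_simp
  ring

lemma continuous_catalanIntegrand : Continuous catalanIntegrand :=
  Continuous.div (by fun_prop) (by fun_prop) fun s => (one_add_exp_neg_two_mul_pos s).ne'

lemma integrableOn_Ioi_catalanIntegrand : IntegrableOn catalanIntegrand (Set.Ioi 0) := by
  -- dominated by `s e^{-s}`, the integrand of `Γ(2)`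
  refine (GammaIntegral_convergent (s := 2) (by norm_num)).integrable.mono
    continuous_catalanIntegrand.aestronglyMeasurable.restrict ?_
  filter_upwards [ae_restrict_mem measurableSet_Ioi] with s (hs : 0 < s)
  have hdom : catalanIntegrand s ≤ s * exp (-s) :=
    div_le_self (by positivity) (by linarith [exp_pos (-2 * s)])
  rw [norm_of_nonneg (by unfold catalanIntegrand; positivity), norm_of_nonneg (by positivity)]
  have hpow : s ^ ((2 : ℝ) - 1) = s := by norm_num
  simpa [hpow, mul_comm] using hdom

lemma tendsto_integral_catalanIntegrand :
    Tendsto (fun t => ∫ s in (0 : ℝ)..t, catalanIntegrand s) atTop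
      (nhds ((1 / 2) * ∫ s in Set.Ioi (0 : ℝ), s / cosh s)) := by
  have hlim : (∫ s in Set.Ioi (0 : ℝ), catalanIntegrand s) =
      (1 / 2) * ∫ s in Set.Ioi (0 : ℝ), s / cosh s := by
    rw [← integral_const_mul]
    congr 1 with s
    rw [catalanIntegrand_eq_div_cosh]; ring
  exact hlim ▸ intervalIntegral_tendsto_integral_Ioi 0 integrableOn_Ioi_catalanIntegrand tendsto_id

lemma hasDerivAt_integral_catalanIntegrand (t : ℝ) :
    HasDerivAt (fun t => ∫ s in (0 : ℝ)..t, catalanIntegrand s) (catalanIntegrand t) t :=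
  intervalIntegral.integral_hasDerivAt_right (continuous_catalanIntegrand.intervalIntegrable 0 t)
    (continuous_catalanIntegrand.stronglyMeasurableAtFilter _ _)
    continuous_catalanIntegrand.continuousAt

lemma hasDerivAt_exp_neg (t : ℝ) : HasDerivAt (fun t => exp (-t)) (-exp (-t)) t := by
  simpa using (hasDerivAt_neg t).exp

lemma hasDerivAt_exp_neg_two_mul_div (t : ℝ) :
    HasDerivAt (fun t => exp (-2 * t) / (1 + exp (-2 * t)))
      (-2 * exp (-t) ^ 2 * (1 - exp (-2 * t) / (1 + exp (-2 * t))) ^ 2) t := by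
  have hnum : HasDerivAt (fun t => exp (-2 * t)) (-2 * exp (-2 * t)) t := by
    simpa [mul_comm] using ((hasDerivAt_id t).const_mul (-2)).exp
  refine (hnum.div (hnum.const_add 1) (one_add_exp_neg_two_mul_pos t).ne').congr_deriv ?_
  have := (one_add_exp_neg_two_mul_pos t).ne'
  rw [← exp_neg_two_mul]
  field_simp
  ring

/-- Explicit-solution verification of the PIVP computing Catalan's constant
`(1/2)·∫₀^∞ s / cosh s ds`. -/
theorem stmt_14 :
    let E : ℝ → ℝ := fun t => Real.exp (-t)
    let R : ℝ → ℝ := fun t => t * Real.exp (-t)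
    let V : ℝ → ℝ := fun t => Real.exp (-2 * t) / (1 + Real.exp (-2 * t))
    let G : ℝ → ℝ := fun t => ∫ s in (0 : ℝ)..t,
      s * Real.exp (-s) / (1 + Real.exp (-2 * s))
    (∀ t : ℝ, 0 ≤ t → HasDerivAt G (R t * (1 - V t)) t) ∧
    (∀ t : ℝ, 0 ≤ t → HasDerivAt R (E t - R t) t) ∧
    (∀ t : ℝ, 0 ≤ t → HasDerivAt E (-(E t)) t) ∧
    (∀ t : ℝ, 0 ≤ t → HasDerivAt V (-2 * E t ^ 2 * (1 - V t) ^ 2) t) ∧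
    G 0 = 0 ∧ R 0 = 0 ∧ E 0 = 1 ∧ V 0 = 1 / 2 ∧
    Tendsto G atTop
      (nhds ((1 / 2) * ∫ s in Set.Ioi (0 : ℝ), s / Real.cosh s)) := by
  intro E R V G
  refine ⟨fun t _ => ?_, fun t _ => ?_, fun t _ => hasDerivAt_exp_neg t,
    fun t _ => hasDerivAt_exp_neg_two_mul_div t, by simp [G], by simp [R], by simp [E],
    by norm_num [V], tendsto_integral_catalanIntegrand⟩
  · exact (hasDerivAt_integral_catalanIntegrand t).congr_deriv (catalanIntegrand_eq_mul_one_sub t)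
  · exact ((hasDerivAt_id' t).mul (hasDerivAt_exp_neg t)).congr_deriv (by ring)
end
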